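/- arXiv:1910.09976 — 7 statements merged into one kernel-verified Lean document; each statement's English description precedes it below -/
import Mathlib

section
/- Let f : ℝ^{n_x} × ℝ^{n_p} × [0,T] → ℝ^{n_x} define the initial value problem ẋ(t) = f(x(t), p, t), x(0) = x₀, with solution x(t,p) on [0,T], where x₀ does not depend on p. If the partial derivatives d_x f and d_p f exist and are continuous in a neighborhood of the solution x(t) for t ∈ [0,T], then the transposed parameter sensitivity satisfies d_p x(T,p)^⊤ = ∫₀^T d_p f(x(t), p, t)^⊤ λ(t) dt, where λ(t) ∈ ℝ^{n_x × n_x} solves the adjoint system λ̇(t) = − d_x f(x(t), p, t)^⊤ λ(t) for t ∈ [0,T] with terminal condition λ(T) = I (the n_x × n_x identity matrix). -/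
/-!
Write `g(t) = x(t, q) - x(t, p)`, `h = q - p`, and `A(t)`, `B(t)` for `d_x f`, `d_p f` along the
trajectory of `p`. The adjoint equation makes `(gᵀ λ)' = (g' - A g)ᵀ λ`, so `g(0) = 0` and
`λ(T) = I` give `g(T) - (∫₀ᵀ λᵀ B) h = ∫₀ᵀ λᵀ (g' - A g - B h)`. The integrand is the
linearization error of `f` along the trajectory. Continuity of the Jacobians on a compact tube
around the trajectory makes this error `o(‖g‖ + ‖h‖)` uniformly in `t`, and Grönwall's inequality,
bootstrapped to keep `x(·, q)` inside the tube, gives `‖g‖ = O(‖h‖)`. So the error is `o(‖h‖)`.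
-/

open Matrix Set MeasureTheory

theorem norm_le_gronwallBound_of_norm_deriv_right_le_of_lt {E : Type*} [NormedAddCommGroup E]
    [NormedSpace ℝ E] {g g' : ℝ → E} {δ K ε r a b : ℝ}
    (hg : ContinuousOn g (Icc a b)) (hg' : ∀ t ∈ Ico a b, HasDerivWithinAt g (g' t) (Ici t) t)
    (ha : ‖g a‖ ≤ δ) (bound : ∀ t ∈ Ico a b, ‖g t‖ < r → ‖g' t‖ ≤ K * ‖g t‖ + ε)
    (hr : ∀ t ∈ Icc a b, gronwallBound δ K ε (t - a) < r) :
    ∀ t ∈ Icc a b, ‖g t‖ ≤ gronwallBound δ K ε (t - a) := by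
  -- At the first time `τ` with `‖g τ‖ ≥ r`, Grönwall on `[a, τ]` would give `‖g τ‖ < r`.
  have hlt : ∀ t ∈ Icc a b, ‖g t‖ < r := by
    by_contra! hexit
    have hclosed : IsClosed (Icc a b ∩ g ⁻¹' {v | r ≤ ‖v‖}) :=
      hg.preimage_isClosed_of_isClosed isClosed_Icc (isClosed_le continuous_const continuous_norm)
    obtain ⟨τ, ⟨hτ, hrτ⟩, hfirst⟩ :=
      (isCompact_Icc.of_isClosed_subset hclosed inter_subset_left).exists_isLeast hexit
    have hbefore : ∀ t ∈ Ico a τ, ‖g t‖ < r := fun t ht =>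
      lt_of_not_ge fun hrt => ht.2.not_ge (hfirst ⟨⟨ht.1, ht.2.le.trans hτ.2⟩, hrt⟩)
    have := norm_le_gronwallBound_of_norm_deriv_right_le (hg.mono (Icc_subset_Icc_right hτ.2))
      (fun t ht => hg' t ⟨ht.1, ht.2.trans_le hτ.2⟩) ha
      (fun t ht => bound t ⟨ht.1, ht.2.trans_le hτ.2⟩ (hbefore t ht)) τ ⟨hτ.1, le_rfl⟩
    exact (hrτ.trans this).not_gt (hr τ hτ)
  exact norm_le_gronwallBound_of_norm_deriv_right_le hg hg' ha
    fun t ht => bound t ht (hlt t (Ico_subset_Icc_self ht))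

theorem IsCompact.exists_forall_dist_lt_of_continuousOn {α β : Type*} [PseudoMetricSpace α]
    [PseudoMetricSpace β] {K U : Set α} {φ : α → β} (hK : IsCompact K) (hU : IsOpen U)
    (hKU : K ⊆ U) (hφ : ContinuousOn φ U) {ε : ℝ} (hε : 0 < ε) :
    ∃ δ > 0, ∀ k ∈ K, ∀ u, dist u k < δ → u ∈ U ∧ dist (φ u) (φ k) < ε := by
  obtain ⟨δ₁, hδ₁, hthick⟩ := hK.exists_thickening_subset_open hU hKU
  obtain ⟨δ₂, hδ₂, hunif⟩ := Metric.mem_uniformity_dist.1 <|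
    hK.uniformContinuousAt_of_continuousAt φ (fun k hk => hφ.continuousAt (hU.mem_nhds (hKU hk)))
      (Metric.dist_mem_uniformity hε)
  refine ⟨min δ₁ δ₂, lt_min hδ₁ hδ₂, fun k hk u hu => ⟨hthick ?_, ?_⟩⟩
  · exact Metric.mem_thickening_iff.2 ⟨k, hk, hu.trans_le (min_le_left _ _)⟩
  · rw [dist_comm (φ u)]
    exact hunif (by rw [dist_comm]; exact hu.trans_le (min_le_right _ _)) hk

section PartialDerivatives

variable {E F H P : Type*} [NormedAddCommGroup E] [NormedSpace ℝ E] [NormedAddCommGroup F]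
  [NormedSpace ℝ F] [NormedAddCommGroup H] [NormedSpace ℝ H] [PseudoMetricSpace P]

theorem IsCompact.exists_norm_sub_sub_fderiv_le {f : E → F → P → H} {A : E × F × P → E →L[ℝ] H}
    {B : E × F × P → F →L[ℝ] H} {K U : Set (E × F × P)} (hK : IsCompact K) (hU : IsOpen U)
    (hKU : K ⊆ U) (hA : ∀ u ∈ U, HasFDerivAt (fun y => f y u.2.1 u.2.2) (A u) u.1)
    (hB : ∀ u ∈ U, HasFDerivAt (fun q => f u.1 q u.2.2) (B u) u.2.1)
    (hAB : ContinuousOn (fun u => (A u, B u)) U) {ε : ℝ} (hε : 0 < ε) :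
    ∃ δ > 0, ∀ k ∈ K, ∀ y q, ‖y - k.1‖ ≤ δ → ‖q - k.2.1‖ ≤ δ →
      ‖f y q k.2.2 - f k.1 k.2.1 k.2.2 - A k (y - k.1) - B k (q - k.2.1)‖
        ≤ ε * (‖y - k.1‖ + ‖q - k.2.1‖) := by
  obtain ⟨δ, hδ, hnear⟩ := hK.exists_forall_dist_lt_of_continuousOn hU hKU hAB hε
  refine ⟨δ / 2, half_pos hδ, fun k hk y q hy hq => ?_⟩
  obtain ⟨x, p, t⟩ := k
  have hclose : ∀ y' q', ‖y' - x‖ ≤ δ / 2 → ‖q' - p‖ ≤ δ / 2 →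
      (y', q', t) ∈ U ∧ ‖A (y', q', t) - A (x, p, t)‖ ≤ ε ∧ ‖B (y', q', t) - B (x, p, t)‖ ≤ ε := by
    intro y' q' hy' hq'
    have hdist : dist (y', q', t) (x, p, t) < δ := by
      simp only [Prod.dist_eq, dist_self, dist_eq_norm]
      exact lt_of_le_of_lt (max_le hy' (max_le hq' (half_pos hδ).le)) (half_lt_self hδ)
    obtain ⟨hmem, hAB'⟩ := hnear _ hk _ hdist
    rw [Prod.dist_eq, dist_eq_norm, dist_eq_norm] at hAB'
    exact ⟨hmem, (le_max_left _ _).trans hAB'.le, (le_max_right _ _).trans hAB'.le⟩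
  have hstate : ‖f y q t - f x q t - A (x, p, t) (y - x)‖ ≤ ε * ‖y - x‖ :=
    (convex_closedBall x (δ / 2)).norm_image_sub_le_of_norm_hasFDerivWithin_le'
      (f := fun y' => f y' q t)
      (fun y' hy' => (hA _ (hclose y' q (mem_closedBall_iff_norm.1 hy') hq).1).hasFDerivWithinAt)
      (fun y' hy' => (hclose y' q (mem_closedBall_iff_norm.1 hy') hq).2.1)
      (Metric.mem_closedBall_self (half_pos hδ).le) (mem_closedBall_iff_norm.2 hy)
  have hparam : ‖f x q t - f x p t - B (x, p, t) (q - p)‖ ≤ ε * ‖q - p‖ :=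
    (convex_closedBall p (δ / 2)).norm_image_sub_le_of_norm_hasFDerivWithin_le'
      (f := fun q' => f x q' t)
      (fun q' hq' => (hB _ (hclose x q' (by simpa using (half_pos hδ).le)
        (mem_closedBall_iff_norm.1 hq')).1).hasFDerivWithinAt)
      (fun q' hq' => (hclose x q' (by simpa using (half_pos hδ).le)
        (mem_closedBall_iff_norm.1 hq')).2.2)
      (Metric.mem_closedBall_self (half_pos hδ).le) (mem_closedBall_iff_norm.2 hq)
  calc ‖f y q t - f x p t - A (x, p, t) (y - x) - B (x, p, t) (q - p)‖
      = ‖(f y q t - f x q t - A (x, p, t) (y - x))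
          + (f x q t - f x p t - B (x, p, t) (q - p))‖ := by congr 1; abel
    _ ≤ ε * ‖y - x‖ + ε * ‖q - p‖ := (norm_add_le _ _).trans (add_le_add hstate hparam)
    _ = ε * (‖y - x‖ + ‖q - p‖) := by ring

end PartialDerivatives

section MatrixCalculus

theorem Matrix.continuousOn_of_hasDerivAt_apply {ι κ : Type*} {s : Set ℝ}
    {Λ Λ' : ℝ → Matrix ι κ ℝ} (h : ∀ t ∈ s, ∀ i j, HasDerivAt (fun u => Λ u i j) (Λ' t i j) t) :
    ContinuousOn Λ s :=
  continuousOn_pi.2 fun i => continuousOn_pi.2 fun j t ht =>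
    (h t ht i j).continuousAt.continuousWithinAt

variable {ι κ : Type*} [Fintype ι]

theorem Matrix.continuous_toContinuousLinearMap_mulVecLin [Fintype κ] :
    Continuous fun M : Matrix ι κ ℝ => LinearMap.toContinuousLinearMap M.mulVecLin :=
  continuous_clm_apply.2 fun _ => continuous_id.matrix_mulVec continuous_const

theorem IsCompact.exists_norm_mulVec_le [Fintype κ] {α : Type*} [TopologicalSpace α] {s : Set α}
    {M : α → Matrix ι κ ℝ} (hs : IsCompact s) (hM : ContinuousOn M s) :
    ∃ C, ∀ t ∈ s, ∀ v, ‖M t *ᵥ v‖ ≤ C * ‖v‖ := by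
  obtain ⟨C, hC⟩ := hs.exists_bound_of_continuousOn
    (continuous_toContinuousLinearMap_mulVecLin.comp_continuousOn hM)
  exact ⟨C, fun t ht v => ((LinearMap.toContinuousLinearMap (M t).mulVecLin).le_opNorm v).trans
    (mul_le_mul_of_nonneg_right (hC t ht) (norm_nonneg v))⟩

theorem HasDerivAt.vecMul {Λ : ℝ → Matrix ι κ ℝ} {Λ' : Matrix ι κ ℝ} {g : ℝ → ι → ℝ}
    {g' : ι → ℝ} {t : ℝ} (hg : HasDerivAt g g' t)
    (hΛ : ∀ i j, HasDerivAt (fun s => Λ s i j) (Λ' i j) t) :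
    HasDerivAt (fun s => g s ᵥ* Λ s) (g' ᵥ* Λ t + g t ᵥ* Λ') t := by
  refine hasDerivAt_pi.2 fun j => ?_
  show HasDerivAt (fun s => ∑ i, g s i * Λ s i j) (∑ i, g' i * Λ t i j + ∑ i, g t i * Λ' i j) t
  rw [← Finset.sum_add_distrib]
  exact HasDerivAt.fun_sum fun i _ => (hasDerivAt_pi.1 hg i).mul (hΛ i j)

theorem vecMul_of_intervalIntegral [Fintype κ] {M : ℝ → Matrix ι κ ℝ} {a b : ℝ}
    (hM : ContinuousOn M (uIcc a b)) (v : ι → ℝ) :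
    v ᵥ* Matrix.of (fun i j => ∫ t in a..b, M t i j) = ∫ t in a..b, v ᵥ* M t := by
  have hint : IntervalIntegrable (fun t => v ᵥ* M t) volume a b :=
    ((continuous_const.matrix_vecMul continuous_id).comp_continuousOn hM).intervalIntegrable
  ext j
  rw [← ContinuousLinearMap.proj_apply (R := ℝ) j (∫ t in a..b, v ᵥ* M t),
    ← ContinuousLinearMap.intervalIntegral_comp_comm _ hint]
  simp only [vecMul, dotProduct, of_apply, ContinuousLinearMap.proj_apply]
  have hentry : ∀ i, IntervalIntegrable (fun t => M t i j) volume a b := fun i =>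
    ((continuous_id.matrix_elem i j).comp_continuousOn hM).intervalIntegrable
  rw [intervalIntegral.integral_finsetSum fun i _ => (hentry i).const_mul (v i)]
  simp only [intervalIntegral.integral_const_mul]

/-- The adjoint equation makes `(gᵀ Λ)' = (g' - A g)ᵀ Λ`; integrate over `[a, b]`. -/
theorem sub_mulVec_eq_integral_of_adjoint [DecidableEq ι] [Fintype κ] {A Λ : ℝ → Matrix ι ι ℝ}
    {B : ℝ → Matrix ι κ ℝ} {g g' : ℝ → ι → ℝ} {a b : ℝ} (hab : a ≤ b)
    (hg : ∀ t ∈ Icc a b, HasDerivAt g (g' t) t) (hg' : ContinuousOn g' (Icc a b)) (hga : g a = 0)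
    (hA : ContinuousOn A (Icc a b)) (hB : ContinuousOn B (Icc a b)) (hΛb : Λ b = 1)
    (hΛ : ∀ t ∈ Icc a b, ∀ i j, HasDerivAt (fun s => Λ s i j) ((-((A t)ᵀ * Λ t)) i j) t)
    (v : κ → ℝ) :
    g b - (Matrix.of fun i j => ∫ t in a..b, ((B t)ᵀ * Λ t) i j)ᵀ *ᵥ v =
      ∫ t in a..b, (g' t - A t *ᵥ g t - B t *ᵥ v) ᵥ* Λ t := by
  have hΛc : ContinuousOn Λ (Icc a b) := continuousOn_of_hasDerivAt_apply hΛ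
  have hgc : ContinuousOn g (Icc a b) := fun t ht => (hg t ht).continuousAt.continuousWithinAt
  rw [← uIcc_of_le hab] at hg hg' hA hB hΛ hΛc hgc
  have hint₁ : IntervalIntegrable (fun t => (g' t - A t *ᵥ g t) ᵥ* Λ t) volume a b :=
    ContinuousOn.intervalIntegrable (by fun_prop)
  have hint₂ : IntervalIntegrable (fun t => v ᵥ* ((B t)ᵀ * Λ t)) volume a b :=
    ContinuousOn.intervalIntegrable (by fun_prop)
  have hFTC := intervalIntegral.integral_eq_sub_of_hasDerivAt (f := fun t => g t ᵥ* Λ t)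
    (fun t ht => ((hg t ht).vecMul (hΛ t ht)).congr_deriv (by
      rw [sub_vecMul, ← vecMul_transpose, vecMul_vecMul, vecMul_neg, sub_eq_add_neg]))
    hint₁
  rw [hΛb, vecMul_one, hga, zero_vecMul, sub_zero] at hFTC
  have hvecMul_B : ∀ t, (B t *ᵥ v) ᵥ* Λ t = v ᵥ* ((B t)ᵀ * Λ t) := fun t => by
    rw [← vecMul_vecMul, vecMul_transpose]
  simp only [sub_vecMul _ (_ - _), hvecMul_B]
  rw [intervalIntegral.integral_sub hint₁ hint₂, hFTC, mulVec_transpose,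
    vecMul_of_intervalIntegral (by fun_prop)]

end MatrixCalculus

theorem exists_norm_sub_le_mul_norm_param_sub {X Q : Type*} [NormedAddCommGroup X]
    [NormedSpace ℝ X] [NormedAddCommGroup Q] {f : X → Q → ℝ → X} {x : ℝ → Q → X} {x0 : X}
    {p : Q} {T L r : ℝ} (hT : 0 ≤ T) (hL : 0 < L) (hr : 0 < r) (hinit : ∀ q, x 0 q = x0)
    (hsol : ∀ q, ∀ t ∈ Icc 0 T, HasDerivAt (fun s => x s q) (f (x t q) q t) t)
    (hf : ∀ t ∈ Icc 0 T, ∀ y q, ‖y - x t p‖ ≤ r → ‖q - p‖ ≤ r →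
      ‖f y q t - f (x t p) p t‖ ≤ L * (‖y - x t p‖ + ‖q - p‖)) :
    ∃ C δ, 0 ≤ C ∧ 0 < δ ∧ ∀ q, ‖q - p‖ ≤ δ → ∀ t ∈ Icc 0 T, ‖x t q - x t p‖ ≤ C * ‖q - p‖ := by
  have hexp : 1 ≤ Real.exp (L * T) := Real.one_le_exp (by positivity)
  refine ⟨Real.exp (L * T) - 1, r / (2 * Real.exp (L * T)), by linarith, by positivity,
    fun q hq t ht => ?_⟩
  have hqr : ‖q - p‖ ≤ r := hq.trans (div_le_self hr.le (by linarith))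
  have hbound : ∀ s ∈ Icc 0 T,
      gronwallBound 0 L (L * ‖q - p‖) (s - 0) ≤ (Real.exp (L * T) - 1) * ‖q - p‖ := by
    intro s hs
    simp only [gronwallBound_of_K_ne_0 hL.ne', mul_div_cancel_left₀ _ hL.ne', sub_zero, zero_mul,
      zero_add]
    rw [mul_comm]
    gcongr
    exact hs.2
  have hsmall : (Real.exp (L * T) - 1) * ‖q - p‖ < r := by
    rw [le_div_iff₀ (by positivity)] at hq
    nlinarith [norm_nonneg (q - p)]
  refine (norm_le_gronwallBound_of_norm_deriv_right_le_of_lt (g := fun s => x s q - x s p)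
    (g' := fun s => f (x s q) q s - f (x s p) p s) (r := r)
    (fun s hs => ((hsol q s hs).sub (hsol p s hs)).continuousAt.continuousWithinAt)
    (fun s hs => ((hsol q s (Ico_subset_Icc_self hs)).sub
      (hsol p s (Ico_subset_Icc_self hs))).hasDerivWithinAt)
    (by simp [hinit]) (fun s hs hgs => ?_) (fun s hs => (hbound s hs).trans_lt hsmall) t ht).trans
    (hbound t ht)
  rw [← mul_add]
  exact hf s (Ico_subset_Icc_self hs) _ q hgs.le hqr

section Linearization

variable {ι κ : Type*} [Fintype ι] [Fintype κ]

def HasUniformLinearizationAlong (f : (ι → ℝ) → (κ → ℝ) → ℝ → (ι → ℝ)) (γ : ℝ → ι → ℝ)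
    (p : κ → ℝ) (A : ℝ → Matrix ι ι ℝ) (B : ℝ → Matrix ι κ ℝ) (s : Set ℝ) : Prop :=
  ∀ ε > 0, ∃ δ > 0, ∀ t ∈ s, ∀ y q, ‖y - γ t‖ ≤ δ → ‖q - p‖ ≤ δ →
    ‖f y q t - f (γ t) p t - A t *ᵥ (y - γ t) - B t *ᵥ (q - p)‖ ≤ ε * (‖y - γ t‖ + ‖q - p‖)

theorem HasUniformLinearizationAlong.exists_norm_sub_le {f : (ι → ℝ) → (κ → ℝ) → ℝ → (ι → ℝ)}
    {γ : ℝ → ι → ℝ} {p : κ → ℝ} {A : ℝ → Matrix ι ι ℝ} {B : ℝ → Matrix ι κ ℝ} {s : Set ℝ}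
    (hlin : HasUniformLinearizationAlong f γ p A B s) (hs : IsCompact s)
    (hA : ContinuousOn A s) (hB : ContinuousOn B s) :
    ∃ L r, 0 < L ∧ 0 < r ∧ ∀ t ∈ s, ∀ y q, ‖y - γ t‖ ≤ r → ‖q - p‖ ≤ r →
      ‖f y q t - f (γ t) p t‖ ≤ L * (‖y - γ t‖ + ‖q - p‖) := by
  obtain ⟨CA, hCA⟩ := hs.exists_norm_mulVec_le hA
  obtain ⟨CB, hCB⟩ := hs.exists_norm_mulVec_le hB
  obtain ⟨r, hr, hr₁⟩ := hlin 1 one_pos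
  refine ⟨|CA| + |CB| + 1, r, by positivity, hr, fun t ht y q hy hq => ?_⟩
  have hres := hr₁ t ht y q hy hq
  have hAy := (hCA t ht (y - γ t)).trans
    (mul_le_mul_of_nonneg_right (le_abs_self CA) (norm_nonneg _))
  have hBq := (hCB t ht (q - p)).trans
    (mul_le_mul_of_nonneg_right (le_abs_self CB) (norm_nonneg _))
  calc ‖f y q t - f (γ t) p t‖
      = ‖(f y q t - f (γ t) p t - A t *ᵥ (y - γ t) - B t *ᵥ (q - p))
        + A t *ᵥ (y - γ t) + B t *ᵥ (q - p)‖ := by congr 1; abel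
    _ ≤ _ := norm_add₃_le
    _ ≤ (|CA| + |CB| + 1) * (‖y - γ t‖ + ‖q - p‖) := by
        nlinarith [abs_nonneg CA, abs_nonneg CB, norm_nonneg (y - γ t), norm_nonneg (q - p)]

theorem norm_intervalIntegral_vecMul_le {ρ : ℝ → ι → ℝ} {Λ : ℝ → Matrix ι κ ℝ} {T CΛ M : ℝ}
    (hT : 0 ≤ T) (hΛ : ∀ t ∈ Icc 0 T, ∀ v, ‖(Λ t)ᵀ *ᵥ v‖ ≤ CΛ * ‖v‖)
    (hρ : ∀ t ∈ Icc 0 T, ‖ρ t‖ ≤ M) :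
    ‖∫ t in 0..T, ρ t ᵥ* Λ t‖ ≤ T * (|CΛ| * M) := by
  refine (intervalIntegral.norm_integral_le_of_norm_le_const fun t ht => ?_).trans_eq
    (by rw [sub_zero, abs_of_nonneg hT, mul_comm])
  rw [uIoc_of_le hT] at ht
  have ht' := Ioc_subset_Icc_self ht
  rw [← mulVec_transpose]
  exact (hΛ t ht' _).trans (mul_le_mul (le_abs_self CΛ) (hρ t ht') (norm_nonneg _) (abs_nonneg _))

theorem hasFDerivAt_of_adjoint [DecidableEq ι] {f : (ι → ℝ) → (κ → ℝ) → ℝ → (ι → ℝ)}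
    {x : ℝ → (κ → ℝ) → (ι → ℝ)} {x0 : ι → ℝ} {p : κ → ℝ} {T : ℝ} {A Λ : ℝ → Matrix ι ι ℝ}
    {B : ℝ → Matrix ι κ ℝ} (hT : 0 ≤ T) (hinit : ∀ q, x 0 q = x0)
    (hsol : ∀ q, ∀ t ∈ Icc 0 T, HasDerivAt (fun s => x s q) (f (x t q) q t) t)
    (hf : ∀ q, ContinuousOn (fun t => f (x t q) q t) (Icc 0 T))
    (hA : ContinuousOn A (Icc 0 T)) (hB : ContinuousOn B (Icc 0 T))
    (hlin : HasUniformLinearizationAlong f (fun t => x t p) p A B (Icc 0 T)) (hΛT : Λ T = 1)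
    (hΛ : ∀ t ∈ Icc 0 T, ∀ i j, HasDerivAt (fun s => Λ s i j) ((-((A t)ᵀ * Λ t)) i j) t) :
    HasFDerivAt (fun q => x T q) (LinearMap.toContinuousLinearMap
      (Matrix.of fun i j => ∫ t in 0..T, ((B t)ᵀ * Λ t) i j)ᵀ.mulVecLin) p := by
  have hΛc : ContinuousOn (fun t => (Λ t)ᵀ) (Icc 0 T) := by
    have := continuousOn_of_hasDerivAt_apply hΛ
    fun_prop
  obtain ⟨CΛ, hCΛ⟩ := isCompact_Icc.exists_norm_mulVec_le hΛc
  obtain ⟨L, r, hL, hr, hlip⟩ := hlin.exists_norm_sub_le isCompact_Icc hA hB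
  obtain ⟨C, δ₀, hC, hδ₀, hstab⟩ :=
    exists_norm_sub_le_mul_norm_param_sub hT hL hr hinit hsol hlip
  rw [hasFDerivAt_iff_isLittleO_nhds_zero, Asymptotics.isLittleO_iff]
  intro c hc
  -- the integral multiplies the linearization error by at most `K`
  set K := T * |CΛ| * (C + 1) with hKdef
  obtain ⟨δ, hδ, hδlin⟩ := hlin (c / (K + 1)) (by positivity)
  have hη : 0 < min δ₀ (δ / (C + 1)) := lt_min hδ₀ (by positivity)
  filter_upwards [Metric.closedBall_mem_nhds (0 : κ → ℝ) hη] with h hh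
  rw [mem_closedBall_zero_iff, le_min_iff] at hh
  have hstab_h : ∀ t ∈ Icc 0 T, ‖x t (p + h) - x t p‖ ≤ C * ‖h‖ := fun t ht => by
    simpa using hstab (p + h) (by simpa using hh.1) t ht
  have hhδ : ‖h‖ ≤ δ := hh.2.trans (div_le_self hδ.le (by linarith))
  have hgδ : ∀ t ∈ Icc 0 T, ‖x t (p + h) - x t p‖ ≤ δ := fun t ht => by
    have := hstab_h t ht
    rw [le_div_iff₀ (by positivity)] at hh
    nlinarith [norm_nonneg h]
  have hrep := sub_mulVec_eq_integral_of_adjoint hT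
    (g := fun t => x t (p + h) - x t p) (fun t ht => (hsol _ t ht).sub (hsol p t ht))
    ((hf _).sub (hf p)) (by simp [hinit]) hA hB hΛT hΛ h
  simp only [LinearMap.coe_toContinuousLinearMap', mulVecLin_apply]
  rw [hrep]
  refine (norm_intervalIntegral_vecMul_le hT hCΛ (M := c / (K + 1) * ((C + 1) * ‖h‖))
    fun t ht => ?_).trans ?_
  · have hres := hδlin t ht _ (p + h) (hgδ t ht) (by simpa using hhδ)
    rw [add_sub_cancel_left] at hres
    refine hres.trans ?_
    gcongr
    linarith [hstab_h t ht]
  · calc T * (|CΛ| * (c / (K + 1) * ((C + 1) * ‖h‖))) = K / (K + 1) * (c * ‖h‖) := by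
          rw [hKdef]; ring
      _ ≤ c * ‖h‖ := mul_le_of_le_one_left (by positivity)
          ((div_le_one (by positivity)).2 (by linarith))

end Linearization

/-- **Adjoint system.** Under existence and continuity of the partial Jacobians `d_x f` and
`d_p f` in a neighborhood of the solution of `ẋ = f(x, p, t)`, `x(0) = x₀` (with `x₀`
independent of `p`), the transposed parameter sensitivity satisfies
`d_p x(T, p)ᵀ = ∫₀ᵀ d_p f(x(t), p, t)ᵀ λ(t) dt`, where the matrix-valued `λ` solves the
adjoint system `λ̇(t) = − d_x f(x(t), p, t)ᵀ λ(t)`, `λ(T) = I`. -/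
theorem adjoint_system
    (nx np : ℕ) (T : ℝ) (hT : 0 < T)
    (f : (Fin nx → ℝ) → (Fin np → ℝ) → ℝ → (Fin nx → ℝ))
    (x : ℝ → (Fin np → ℝ) → (Fin nx → ℝ))
    (x0 : Fin nx → ℝ) (p : Fin np → ℝ)
    -- the initial value does not depend on the parameter
    (hinit : ∀ q : Fin np → ℝ, x 0 q = x0)
    -- f(·, q, ·) is Lipschitz continuous on ℝ^{n_x} × [0,T] for every q
    (hLip : ∀ q : Fin np → ℝ, ∃ L : NNReal,
      LipschitzOnWith L (fun u : (Fin nx → ℝ) × ℝ => f u.1 q u.2)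
        (Set.univ ×ˢ Set.Icc (0 : ℝ) T))
    -- x(·, q) solves the initial value problem on [0, T]
    (hsol : ∀ q : Fin np → ℝ, ∀ t ∈ Set.Icc (0:ℝ) T,
      HasDerivAt (fun s => x s q) (f (x t q) q t) t)
    -- the Jacobians d_x f and d_p f exist and are continuous in a neighborhood U of the solution
    (U : Set ((Fin nx → ℝ) × (Fin np → ℝ) × ℝ)) (hUopen : IsOpen U)
    (hUtraj : ∀ t ∈ Set.Icc (0:ℝ) T, (x t p, p, t) ∈ U)
    (dxf : (Fin nx → ℝ) → (Fin np → ℝ) → ℝ → Matrix (Fin nx) (Fin nx) ℝ)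
    (dpf : (Fin nx → ℝ) → (Fin np → ℝ) → ℝ → Matrix (Fin nx) (Fin np) ℝ)
    (hdxf : ∀ u ∈ U, HasFDerivAt (fun y => f y u.2.1 u.2.2)
      (LinearMap.toContinuousLinearMap (dxf u.1 u.2.1 u.2.2).mulVecLin) u.1)
    (hdpf : ∀ u ∈ U, HasFDerivAt (fun q => f u.1 q u.2.2)
      (LinearMap.toContinuousLinearMap (dpf u.1 u.2.1 u.2.2).mulVecLin) u.2.1)
    (hcont : ContinuousOn (fun u : (Fin nx → ℝ) × (Fin np → ℝ) × ℝ =>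
        (dxf u.1 u.2.1 u.2.2, dpf u.1 u.2.1 u.2.2)) U)
    -- λ solves the adjoint system λ̇ = −(d_x f)ᵀ λ on [0, T] with λ(T) = I
    (lam : ℝ → Matrix (Fin nx) (Fin nx) ℝ)
    (hlamT : lam T = 1)
    (hlam : ∀ t ∈ Set.Icc (0:ℝ) T, ∀ i j,
      HasDerivAt (fun s => lam s i j) ((-((dxf (x t p) p t)ᵀ * lam t)) i j) t) :
    -- the sensitivity d_p x(T, p) exists and its transpose is given by the integral formula
    DifferentiableAt ℝ (fun q => x T q) p ∧
    ∀ i j, (LinearMap.toMatrix' (fderiv ℝ (fun q => x T q) p).toLinearMap)ᵀ i j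
      = ∫ t in (0:ℝ)..T, ((dpf (x t p) p t)ᵀ * lam t) i j := by
  have hxc : ∀ q, ContinuousOn (fun t => x t q) (Icc 0 T) := fun q t ht =>
    (hsol q t ht).continuousAt.continuousWithinAt
  have htraj : ContinuousOn (fun t => (x t p, p, t)) (Icc 0 T) :=
    (hxc p).prodMk (continuousOn_const.prodMk continuousOn_id)
  have hf : ∀ q, ContinuousOn (fun t => f (x t q) q t) (Icc 0 T) := fun q => by
    obtain ⟨L, hL⟩ := hLip q
    exact hL.continuousOn.comp ((hxc q).prodMk continuousOn_id) fun t ht => ⟨trivial, ht⟩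
  have hJ : ContinuousOn (fun t => (dxf (x t p) p t, dpf (x t p) p t)) (Icc 0 T) :=
    hcont.comp htraj hUtraj
  have hlin : HasUniformLinearizationAlong f (fun t => x t p) p (fun t => dxf (x t p) p t)
      (fun t => dpf (x t p) p t) (Icc 0 T) := fun ε hε => by
    obtain ⟨δ, hδ, hδlin⟩ :=
      (isCompact_Icc.image_of_continuousOn htraj).exists_norm_sub_sub_fderiv_le hUopen (image_subset_iff.2 hUtraj) hdxf hdpf
      ((continuous_toContinuousLinearMap_mulVecLin.prodMap
        continuous_toContinuousLinearMap_mulVecLin).comp_continuousOn hcont) hε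
    exact ⟨δ, hδ, fun t ht => hδlin _ (mem_image_of_mem _ ht)⟩
  have hD := hasFDerivAt_of_adjoint hT.le hinit hsol hf hJ.fst hJ.snd hlin hlamT hlam
  refine ⟨hD.differentiableAt, fun i j => ?_⟩
  rw [hD.fderiv, LinearMap.coe_toContinuousLinearMap, ← Matrix.toLin'_apply',
    LinearMap.toMatrix'_toLin', transpose_transpose]
  rfl
end

section
/- Let f : ℝ^{n_x} × ℝ^{n_p} × [0,T] → ℝ^{n_x} define the initial value problem ẋ(t) = f(x(t), p, t), x(0) = x₀ (with x₀ independent of p), let C : ℝ^{n_x} → ℝ be smooth, and define Φ(p) := C(x(T,p)). If d_x f and d_p f exist and are continuous in a neighborhood of the solution, then the Euclidean gradient of Φ is ∂Φ(p) = ∫₀^T d_p f(x(t), p, t)^⊤ λ(t) dt, where x(t) and λ(t) ∈ ℝ^{n_x} solve the two-point boundary value problem ẋ(t) = f(x(t), p, t), x(0) = x₀, and λ̇(t) = − d_x f(x(t), p, t)^⊤ λ(t) with terminal condition λ(T) = ∂C(x(T)). -/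
open Matrix Set Metric Real Filter Topology

/-- Entrywise bound on a matrix gives a bound on `mulVec` in sup norms. -/
lemma mulVec_norm_le_of_entries {m n : ℕ} (M : Matrix (Fin m) (Fin n) ℝ) (B : ℝ)
    (hB0 : 0 ≤ B) (hB : ∀ i j, |M i j| ≤ B) (v : Fin n → ℝ) :
    ‖M.mulVec v‖ ≤ (n * B) * ‖v‖ := by
  rw [pi_norm_le_iff_of_nonneg (by positivity)]
  intro i
  calc ‖(M.mulVec v) i‖ = |∑ j, M i j * v j| := rfl
    _ ≤ ∑ j, |M i j * v j| := Finset.abs_sum_le_sum_abs _ _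
    _ ≤ ∑ _j : Fin n, B * ‖v‖ := by
        refine Finset.sum_le_sum fun j _ => ?_
        rw [abs_mul]
        exact mul_le_mul (hB i j) (norm_le_pi_norm v j) (abs_nonneg _) hB0
    _ = (n * B) * ‖v‖ := by simp [Finset.sum_const, mul_assoc]

lemma opNorm_mulVecLin_le {m n : ℕ} (M : Matrix (Fin m) (Fin n) ℝ) (B : ℝ)
    (hB0 : 0 ≤ B) (hB : ∀ i j, |M i j| ≤ B) :
    ‖LinearMap.toContinuousLinearMap M.mulVecLin‖ ≤ n * B :=
  ContinuousLinearMap.opNorm_le_bound _ (by positivity)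
    (fun v => mulVec_norm_le_of_entries M B hB0 hB v)

lemma gronwallBound_mono_x {K c : ℝ} (hK : 0 ≤ K) (hc : 0 ≤ c) {s t : ℝ} (hst : s ≤ t) :
    gronwallBound 0 K c s ≤ gronwallBound 0 K c t := by
  rcases eq_or_ne K 0 with h | h
  · subst h; simp only [gronwallBound_K0]; nlinarith
  · simp only [gronwallBound_of_K_ne_0 h, zero_mul, zero_add]
    have : exp (K * s) ≤ exp (K * t) := exp_le_exp.2 (by nlinarith)
    have hKc : 0 ≤ c / K := div_nonneg hc (lt_of_le_of_ne hK (Ne.symm h)).le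
    nlinarith

lemma gronwallBound_zero_le {K c T : ℝ} (hK : 0 < K) (hc : 0 ≤ c) {t : ℝ} (ht : t ≤ T) :
    gronwallBound 0 K c t ≤ c / K * (exp (K * T) - 1) := by
  calc gronwallBound 0 K c t ≤ gronwallBound 0 K c T := gronwallBound_mono_x hK.le hc ht
    _ = c / K * (exp (K * T) - 1) := by simp [gronwallBound_of_K_ne_0 hK.ne']

/-- Grönwall estimate where the differential inequality is only assumed while the solution
stays in a tube of radius `ε`; if the Grönwall bound stays below `ε`, the solution never
leaves the tube and the bound holds on all of `[0, T]`. -/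
lemma gronwall_tube {E : Type*} [NormedAddCommGroup E] [NormedSpace ℝ E]
    (y y' : ℝ → E) (T ε K c : ℝ) (hT : 0 ≤ T) (hε : 0 < ε) (hK : 0 ≤ K) (hc : 0 ≤ c)
    (hy : ∀ t ∈ Icc (0:ℝ) T, HasDerivAt y (y' t) t) (h0 : y 0 = 0)
    (hbound : ∀ t ∈ Icc (0:ℝ) T, ‖y t‖ ≤ ε → ‖y' t‖ ≤ K * ‖y t‖ + c)
    (hsmall : gronwallBound 0 K c T < ε) :
    ∀ t ∈ Icc (0:ℝ) T, ‖y t‖ ≤ gronwallBound 0 K c t := by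
  set A : Set ℝ := {t | t ∈ Icc (0:ℝ) T ∧ ∀ s ∈ Icc (0:ℝ) t, ‖y s‖ ≤ ε} with hA
  have h0A : (0:ℝ) ∈ A := by
    refine ⟨⟨le_refl 0, hT⟩, fun s hs => ?_⟩
    have hs0 : s = 0 := le_antisymm hs.2 hs.1
    simp [hs0, h0, hε.le]
  have hAbdd : BddAbove A := ⟨T, fun t ht => ht.1.2⟩
  set σ := sSup A with hσdef
  have hσ0 : 0 ≤ σ := le_csSup hAbdd h0A
  have hσT : σ ≤ T := csSup_le ⟨0, h0A⟩ fun t ht => ht.1.2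
  have hycont : ∀ t ∈ Icc (0:ℝ) T, ContinuousAt y t := fun t ht => (hy t ht).continuousAt
  have hlt : ∀ s, 0 ≤ s → s < σ → ‖y s‖ ≤ ε := by
    intro s hs0 hsσ
    obtain ⟨t, htA, hst⟩ := exists_lt_of_lt_csSup ⟨0, h0A⟩ hsσ
    exact htA.2 s ⟨hs0, hst.le⟩
  have hyσ : ‖y σ‖ ≤ ε := by
    rcases eq_or_lt_of_le hσ0 with h | h
    · simp [← h, h0, hε.le]
    · refine le_of_tendsto (((hycont σ ⟨hσ0, hσT⟩).norm).tendsto.mono_left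
        (nhdsWithin_le_nhds : 𝓝[Iio σ] σ ≤ _)) ?_
      filter_upwards [Ioo_mem_nhdsLT_of_mem (⟨h, le_refl σ⟩ : σ ∈ Ioc 0 σ)] with s hs
      exact hlt s hs.1.le hs.2
  have hσmem : ∀ s ∈ Icc (0:ℝ) σ, ‖y s‖ ≤ ε := by
    intro s hs
    rcases lt_or_eq_of_le hs.2 with h | h
    · exact hlt s hs.1 h
    · rw [h]; exact hyσ
  have hG : ∀ t ∈ Icc (0:ℝ) σ, ‖y t‖ ≤ gronwallBound 0 K c (t - 0) := by
    apply norm_le_gronwallBound_of_norm_deriv_right_le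
    · exact fun t ht => (hycont t ⟨ht.1, ht.2.trans hσT⟩).continuousWithinAt
    · exact fun t ht => (hy t ⟨ht.1, ht.2.le.trans hσT⟩).hasDerivWithinAt
    · simp [h0]
    · exact fun t ht => hbound t ⟨ht.1, ht.2.le.trans hσT⟩ (hσmem t ⟨ht.1, ht.2.le⟩)
  have hσeq : σ = T := by
    by_contra hne
    have hσlt : σ < T := lt_of_le_of_ne hσT hne
    have hyσ' : ‖y σ‖ < ε := by
      have h1 := hG σ ⟨hσ0, le_refl σ⟩
      rw [sub_zero] at h1
      exact lt_of_le_of_lt (h1.trans (gronwallBound_mono_x hK hc hσT)) hsmall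
    have hev : ∀ᶠ s in 𝓝 σ, ‖y s‖ < ε :=
      ((hycont σ ⟨hσ0, hσT⟩).norm).tendsto.eventually_lt_const hyσ'
    obtain ⟨η, hη, hball⟩ := Metric.eventually_nhds_iff.1 hev
    set t₁ := min (σ + η / 2) T with ht₁def
    have hσt₁ : σ < t₁ := lt_min (by linarith) hσlt
    have ht₁A : t₁ ∈ A := by
      refine ⟨⟨le_trans hσ0 hσt₁.le, min_le_right _ _⟩, fun s hs => ?_⟩
      rcases le_or_gt s σ with h | h
      · exact hσmem s ⟨hs.1, h⟩
      · refine (hball (y := s) ?_).le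
        rw [Real.dist_eq, abs_of_nonneg (by linarith)]
        have : s ≤ σ + η / 2 := hs.2.trans (min_le_left _ _)
        linarith
    exact absurd (le_csSup hAbdd ht₁A) (not_le.2 hσt₁)
  intro t ht
  have := hG t (by rw [hσeq]; exact ht)
  simpa using this

lemma dot_aux {n : ℕ} (A : Matrix (Fin n) (Fin n) ℝ) (l y d : Fin n → ℝ) :
    ∑ i, (-(Aᵀ *ᵥ l) i * y i + l i * d i) = l ⬝ᵥ (d - A *ᵥ y) := by
  have h1 : ∑ i, (Aᵀ *ᵥ l) i * y i = ∑ i, l i * (A *ᵥ y) i := by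
    simp only [Matrix.mulVec, dotProduct, Matrix.transpose_apply, Finset.sum_mul,
      Finset.mul_sum]
    rw [Finset.sum_comm]
    refine Finset.sum_congr rfl fun i _ => Finset.sum_congr rfl fun j _ => by ring
  simp only [dotProduct, Pi.sub_apply, mul_sub, neg_mul, Finset.sum_add_distrib,
    Finset.sum_sub_distrib, Finset.sum_neg_distrib, h1]
  ring


private lemma arith1 {K η : ℝ} (hK : 0 ≤ K) (hη : 0 < η) : K * (η / (2 * (K + 1))) < η := by
  rw [mul_comm, div_mul_eq_mul_div, div_lt_iff₀ (by nlinarith)]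
  nlinarith

private lemma arith2 {K η : ℝ} (hK : 0 ≤ K) (hη : 0 < η) : K * (η / (K + 1)) ≤ η := by
  rw [mul_comm, div_mul_eq_mul_div, div_le_iff₀ (by nlinarith)]
  nlinarith

private lemma arith3 {c Q : ℝ} (hc : 0 ≤ c) (hQ : 0 ≤ Q) : c / (2 * (Q + 1)) * Q ≤ c / 2 := by
  rw [div_mul_eq_mul_div, div_le_div_iff₀ (by nlinarith) two_pos]
  nlinarith

private lemma arith5 {a b c d : ℝ} (h1 : a ≤ c / 2) (h2 : b ≤ c / 2) (hd : 0 ≤ d) :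
    a * d + b * d ≤ c * d := by nlinarith

set_option maxHeartbeats 2000000 in
/-- **Adjoint sensitivity (differentiate-then-discretize).** For `Φ(p) = C(x(T, p))`, where
`x(·, p)` solves `ẋ = f(x, p, t)`, `x(0) = x₀` (with `x₀` independent of `p`), and where
`C` is smooth, the Euclidean gradient of `Φ` is `∂Φ(p) = ∫₀ᵀ d_p f(x(t), p, t)ᵀ λ(t) dt`,
where `λ` solves the adjoint equation `λ̇ = − d_x f(x(t), p, t)ᵀ λ` with terminal condition
`λ(T) = ∂C(x(T))`. -/
theorem adjoint_sensitivity_gradient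
    (nx np : ℕ) (T : ℝ) (hT : 0 < T)
    (f : (Fin nx → ℝ) → (Fin np → ℝ) → ℝ → (Fin nx → ℝ))
    (x : ℝ → (Fin np → ℝ) → (Fin nx → ℝ))
    (x0 : Fin nx → ℝ) (p : Fin np → ℝ)
    (hinit : ∀ q : Fin np → ℝ, x 0 q = x0)
    (hLip : ∀ q : Fin np → ℝ, ∃ L : NNReal,
      LipschitzOnWith L (fun u : (Fin nx → ℝ) × ℝ => f u.1 q u.2)
        (Set.univ ×ˢ Set.Icc (0 : ℝ) T))
    (hsol : ∀ q : Fin np → ℝ, ∀ t ∈ Set.Icc (0:ℝ) T,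
      HasDerivAt (fun s => x s q) (f (x t q) q t) t)
    -- the Jacobians d_x f and d_p f exist and are continuous in a neighborhood U of the solution
    (U : Set ((Fin nx → ℝ) × (Fin np → ℝ) × ℝ)) (hUopen : IsOpen U)
    (hUtraj : ∀ t ∈ Set.Icc (0:ℝ) T, (x t p, p, t) ∈ U)
    (dxf : (Fin nx → ℝ) → (Fin np → ℝ) → ℝ → Matrix (Fin nx) (Fin nx) ℝ)
    (dpf : (Fin nx → ℝ) → (Fin np → ℝ) → ℝ → Matrix (Fin nx) (Fin np) ℝ)
    (hdxf : ∀ u ∈ U, HasFDerivAt (fun y => f y u.2.1 u.2.2)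
      (LinearMap.toContinuousLinearMap (dxf u.1 u.2.1 u.2.2).mulVecLin) u.1)
    (hdpf : ∀ u ∈ U, HasFDerivAt (fun q => f u.1 q u.2.2)
      (LinearMap.toContinuousLinearMap (dpf u.1 u.2.1 u.2.2).mulVecLin) u.2.1)
    (hcont : ContinuousOn (fun u : (Fin nx → ℝ) × (Fin np → ℝ) × ℝ =>
        (dxf u.1 u.2.1 u.2.2, dpf u.1 u.2.1 u.2.2)) U)
    -- a smooth objective function C
    (C : (Fin nx → ℝ) → ℝ) (hC : ContDiff ℝ (⊤ : ℕ∞) C)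
    -- λ solves the adjoint system λ̇ = −(d_x f)ᵀ λ with terminal condition λ(T) = ∂C(x(T))
    (lam : ℝ → Fin nx → ℝ)
    (hlamT : ∀ j, lam T j = fderiv ℝ C (x T p) (Pi.single j 1))
    (hlam : ∀ t ∈ Set.Icc (0:ℝ) T, ∀ j,
      HasDerivAt (fun s => lam s j) (-(Matrix.mulVec (dxf (x t p) p t)ᵀ (lam t)) j) t) :
    -- gradient formula for Φ(p) = C(x(T, p))
    DifferentiableAt ℝ (fun q => C (x T q)) p ∧
    ∀ j, fderiv ℝ (fun q => C (x T q)) p (Pi.single j 1)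
      = ∫ t in (0:ℝ)..T, Matrix.mulVec (dpf (x t p) p t)ᵀ (lam t) j := by
  classical
  have hxc : ∀ q : Fin np → ℝ, ContinuousOn (fun t => x t q) (Icc (0:ℝ) T) :=
    fun q t ht => ((hsol q t ht).continuousAt).continuousWithinAt
  -- a tube of radius `ε` around the trajectory lies in `U`
  obtain ⟨ε, hε, hεU⟩ : ∃ ε > 0, ∀ (z : Fin nx → ℝ) (q : Fin np → ℝ) (t : ℝ),
      t ∈ Icc (0:ℝ) T → ‖z - x t p‖ ≤ ε → ‖q - p‖ ≤ ε → (z, q, t) ∈ U := by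
    have hγc : ContinuousOn (fun t => ((x t p, p, t) : (Fin nx → ℝ) × (Fin np → ℝ) × ℝ))
        (Icc (0:ℝ) T) := (hxc p).prodMk (continuousOn_const.prodMk continuous_id.continuousOn)
    obtain ⟨δ, hδ, hsub⟩ := (isCompact_Icc.image_of_continuousOn hγc).exists_thickening_subset_open
      hUopen (by rintro _ ⟨t, ht, rfl⟩; exact hUtraj t ht)
    refine ⟨δ / 2, by positivity, fun z q t ht hz hq => hsub ?_⟩
    rw [Metric.mem_thickening_iff]
    refine ⟨(x t p, p, t), ⟨t, ht, rfl⟩, ?_⟩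
    have h1 : dist ((z, q, t) : (Fin nx → ℝ) × (Fin np → ℝ) × ℝ) (x t p, p, t) ≤ δ / 2 := by
      rw [Prod.dist_eq, Prod.dist_eq]
      simp only [dist_self]
      exact max_le (by rwa [dist_eq_norm]) (max_le (by rwa [dist_eq_norm]) (by positivity))
    linarith
  -- the compact tube
  set Tube : Set ((Fin nx → ℝ) × (Fin np → ℝ) × ℝ) :=
    (fun w : (Fin nx → ℝ) × (Fin np → ℝ) × ℝ => (x w.2.2 p + w.1, w.2.1, w.2.2)) ''
      (closedBall 0 ε ×ˢ closedBall p ε ×ˢ Icc (0:ℝ) T) with hTubedef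
  have hTubeMem : ∀ (z : Fin nx → ℝ) (q : Fin np → ℝ) (t : ℝ), t ∈ Icc (0:ℝ) T →
      ‖z - x t p‖ ≤ ε → ‖q - p‖ ≤ ε → (z, q, t) ∈ Tube := by
    intro z q t ht hz hq
    refine ⟨(z - x t p, q, t), ⟨?_, ?_, ht⟩, by simp⟩
    · rwa [mem_closedBall_zero_iff]
    · rwa [mem_closedBall_iff_norm]
  have hTubeU : Tube ⊆ U := by
    rintro _ ⟨w, ⟨hw1, hw2, hw3⟩, rfl⟩
    refine hεU _ _ _ hw3 ?_ ?_
    · rw [add_sub_cancel_left]; rwa [mem_closedBall_zero_iff] at hw1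
    · rwa [mem_closedBall_iff_norm] at hw2
  have hTubeC : IsCompact Tube := by
    refine IsCompact.image_of_continuousOn
      (((isCompact_closedBall _ _).prod ((isCompact_closedBall _ _).prod isCompact_Icc))) ?_
    have h22 : ContinuousOn (fun w : (Fin nx → ℝ) × (Fin np → ℝ) × ℝ => w.2.2)
        (closedBall 0 ε ×ˢ closedBall p ε ×ˢ Icc (0:ℝ) T) :=
      (continuous_snd.comp continuous_snd).continuousOn
    refine ContinuousOn.prodMk (ContinuousOn.add ?_ continuous_fst.continuousOn)
      ((continuous_fst.comp continuous_snd).continuousOn.prodMk h22)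
    exact (hxc p).comp h22 (fun w hw => hw.2.2)
  -- the matrix-valued map, seen as valued in a normed space
  set D : (Fin nx → ℝ) × (Fin np → ℝ) × ℝ → (Fin nx → Fin nx → ℝ) × (Fin nx → Fin np → ℝ) :=
    fun u => (fun i j => dxf u.1 u.2.1 u.2.2 i j, fun i j => dpf u.1 u.2.1 u.2.2 i j) with hDdef
  have hDc : ContinuousOn D U := hcont
  -- uniform bound on the Jacobians over the tube
  obtain ⟨M, hM1, hMx, hMp⟩ : ∃ M : ℝ, 1 ≤ M ∧
      (∀ (z : Fin nx → ℝ) (q : Fin np → ℝ) (t : ℝ), (z, q, t) ∈ Tube →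
        ∀ i j, |dxf z q t i j| ≤ M) ∧
      (∀ (z : Fin nx → ℝ) (q : Fin np → ℝ) (t : ℝ), (z, q, t) ∈ Tube →
        ∀ i j, |dpf z q t i j| ≤ M) := by
    obtain ⟨M0, hM0⟩ := hTubeC.exists_bound_of_continuousOn (hDc.mono hTubeU)
    refine ⟨max M0 1, le_max_right _ _, ?_, ?_⟩
    · intro z q t hzt i j
      calc |dxf z q t i j| ≤ ‖(D (z, q, t)).1‖ := by
            refine (norm_le_pi_norm ((D (z,q,t)).1 i) j).trans (norm_le_pi_norm (D (z,q,t)).1 i)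
        _ ≤ ‖D (z, q, t)‖ := norm_fst_le _
        _ ≤ M0 := hM0 _ hzt
        _ ≤ max M0 1 := le_max_left _ _
    · intro z q t hzt i j
      calc |dpf z q t i j| ≤ ‖(D (z, q, t)).2‖ := by
            refine (norm_le_pi_norm ((D (z,q,t)).2 i) j).trans (norm_le_pi_norm (D (z,q,t)).2 i)
        _ ≤ ‖D (z, q, t)‖ := norm_snd_le _
        _ ≤ M0 := hM0 _ hzt
        _ ≤ max M0 1 := le_max_left _ _
  -- uniform continuity of the Jacobians on the tube
  have hmod : ∀ c' > (0:ℝ), ∃ η, 0 < η ∧ η ≤ ε ∧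
      ∀ t ∈ Icc (0:ℝ) T, ∀ z : Fin nx → ℝ, ‖z - x t p‖ ≤ η → ∀ q : Fin np → ℝ, ‖q - p‖ ≤ η →
        (∀ i j, |dxf z q t i j - dxf (x t p) p t i j| ≤ c') ∧
        (∀ i j, |dpf z q t i j - dpf (x t p) p t i j| ≤ c') := by
    intro c' hc'
    have huc := hTubeC.uniformContinuousOn_of_continuous (hDc.mono hTubeU)
    rw [Metric.uniformContinuousOn_iff] at huc
    obtain ⟨δ', hδ', hd⟩ := huc c' hc'
    refine ⟨min (δ'/2) ε, by positivity, min_le_right _ _, ?_⟩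
    intro t ht z hz q hq
    have hzt : (z, q, t) ∈ Tube :=
      hTubeMem z q t ht (hz.trans (min_le_right _ _)) (hq.trans (min_le_right _ _))
    have hpt : (x t p, p, t) ∈ Tube :=
      hTubeMem _ _ _ ht (by simp [hε.le]) (by simp [hε.le])
    have hdist : dist ((z, q, t) : (Fin nx → ℝ) × (Fin np → ℝ) × ℝ) (x t p, p, t) < δ' := by
      rw [Prod.dist_eq, Prod.dist_eq]
      simp only [dist_self]
      have h1 : dist z (x t p) ≤ δ'/2 := by rw [dist_eq_norm]; exact hz.trans (min_le_left _ _)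
      have h2 : dist q p ≤ δ'/2 := by rw [dist_eq_norm]; exact hq.trans (min_le_left _ _)
      exact lt_of_le_of_lt (max_le h1 (max_le h2 (by positivity))) (by linarith)
    have hDd := hd _ hzt _ hpt hdist
    have hent : ∀ (i : Fin nx),
        (∀ j, dist (dxf z q t i j) (dxf (x t p) p t i j) ≤ dist (D (z,q,t)) (D (x t p, p, t))) ∧
        (∀ j, dist (dpf z q t i j) (dpf (x t p) p t i j) ≤ dist (D (z,q,t)) (D (x t p, p, t))) := by
      intro i
      constructor
      · intro j
        calc dist (dxf z q t i j) (dxf (x t p) p t i j)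
            ≤ dist ((D (z,q,t)).1 i) ((D (x t p,p,t)).1 i) := dist_le_pi_dist _ _ j
          _ ≤ dist ((D (z,q,t)).1) ((D (x t p,p,t)).1) := dist_le_pi_dist _ _ i
          _ ≤ dist (D (z,q,t)) (D (x t p,p,t)) := by rw [Prod.dist_eq]; exact le_max_left _ _
      · intro j
        calc dist (dpf z q t i j) (dpf (x t p) p t i j)
            ≤ dist ((D (z,q,t)).2 i) ((D (x t p,p,t)).2 i) := dist_le_pi_dist _ _ j
          _ ≤ dist ((D (z,q,t)).2) ((D (x t p,p,t)).2) := dist_le_pi_dist _ _ i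
          _ ≤ dist (D (z,q,t)) (D (x t p,p,t)) := by rw [Prod.dist_eq]; exact le_max_right _ _
    constructor
    · intro i j
      rw [← Real.dist_eq]
      exact ((hent i).1 j).trans hDd.le
    · intro i j
      rw [← Real.dist_eq]
      exact ((hent i).2 j).trans hDd.le
  -- mean value estimates in the state variable
  have hfx : ∀ c' B : ℝ, 0 ≤ c' → ∀ t ∈ Icc (0:ℝ) T, ∀ q : Fin np → ℝ, ‖q - p‖ ≤ ε →
      ∀ A0 : Matrix (Fin nx) (Fin nx) ℝ,
      (∀ w : Fin nx → ℝ, ‖w - x t p‖ ≤ B → ∀ i j, |dxf w q t i j - A0 i j| ≤ c') → B ≤ ε → 0 ≤ B →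
      ∀ z, ‖z - x t p‖ ≤ B →
      ‖f z q t - f (x t p) q t - A0 *ᵥ (z - x t p)‖ ≤ (nx * c') * ‖z - x t p‖ := by
    intro c' B hc' t ht q hq A0 hA0 hBε hB0 z hz
    have key := Convex.norm_image_sub_le_of_norm_hasFDerivWithin_le
      (f := fun w => f w q t - A0 *ᵥ w)
      (f' := fun w => LinearMap.toContinuousLinearMap (dxf w q t).mulVecLin -
        LinearMap.toContinuousLinearMap A0.mulVecLin)
      (s := closedBall (x t p) B)
      (C := (nx : ℝ) * c')
      (fun w hw => by
        have hwt : ‖w - x t p‖ ≤ B := by rwa [mem_closedBall_iff_norm] at hw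
        have hU : (w, q, t) ∈ U := hTubeU (hTubeMem w q t ht (hwt.trans hBε) hq)
        exact ((hdxf (w, q, t) hU).sub
          ((LinearMap.toContinuousLinearMap A0.mulVecLin).hasFDerivAt)).hasFDerivWithinAt)
      (fun w hw => by
        have hwt : ‖w - x t p‖ ≤ B := by rwa [mem_closedBall_iff_norm] at hw
        have hsub : LinearMap.toContinuousLinearMap (dxf w q t).mulVecLin -
            LinearMap.toContinuousLinearMap A0.mulVecLin =
            LinearMap.toContinuousLinearMap (dxf w q t - A0).mulVecLin := by
          ext v
          simp [Matrix.sub_mulVec]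
        show ‖LinearMap.toContinuousLinearMap (dxf w q t).mulVecLin -
          LinearMap.toContinuousLinearMap A0.mulVecLin‖ ≤ (nx : ℝ) * c'
        rw [hsub]
        exact opNorm_mulVecLin_le _ c' hc' (hA0 w hwt))
      (convex_closedBall _ _) (mem_closedBall_self hB0) (mem_closedBall_iff_norm.mpr hz)
    have heq : f z q t - A0 *ᵥ z - (f (x t p) q t - A0 *ᵥ (x t p)) =
        f z q t - f (x t p) q t - A0 *ᵥ (z - x t p) := by
      rw [Matrix.mulVec_sub]; abel
    rwa [heq] at key
  -- mean value estimates in the parameter variable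
  have hfq : ∀ c' B : ℝ, 0 ≤ c' → ∀ t ∈ Icc (0:ℝ) T, ∀ z : Fin nx → ℝ, ‖z - x t p‖ ≤ ε →
      ∀ B0 : Matrix (Fin nx) (Fin np) ℝ,
      (∀ q : Fin np → ℝ, ‖q - p‖ ≤ B → ∀ i j, |dpf z q t i j - B0 i j| ≤ c') → B ≤ ε → 0 ≤ B →
      ∀ q, ‖q - p‖ ≤ B →
      ‖f z q t - f z p t - B0 *ᵥ (q - p)‖ ≤ (np * c') * ‖q - p‖ := by
    intro c' B hc' t ht z hz B0 hB0e hBε hB0 q hq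
    have key := Convex.norm_image_sub_le_of_norm_hasFDerivWithin_le
      (f := fun q' => f z q' t - B0 *ᵥ q')
      (f' := fun q' => LinearMap.toContinuousLinearMap (dpf z q' t).mulVecLin -
        LinearMap.toContinuousLinearMap B0.mulVecLin)
      (s := closedBall p B)
      (C := (np : ℝ) * c')
      (fun q' hq' => by
        have hqt : ‖q' - p‖ ≤ B := by rwa [mem_closedBall_iff_norm] at hq'
        have hU : (z, q', t) ∈ U := hTubeU (hTubeMem z q' t ht hz (hqt.trans hBε))
        exact ((hdpf (z, q', t) hU).sub
          ((LinearMap.toContinuousLinearMap B0.mulVecLin).hasFDerivAt)).hasFDerivWithinAt)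
      (fun q' hq' => by
        have hqt : ‖q' - p‖ ≤ B := by rwa [mem_closedBall_iff_norm] at hq'
        have hsub : LinearMap.toContinuousLinearMap (dpf z q' t).mulVecLin -
            LinearMap.toContinuousLinearMap B0.mulVecLin =
            LinearMap.toContinuousLinearMap (dpf z q' t - B0).mulVecLin := by
          ext v
          simp [Matrix.sub_mulVec]
        show ‖LinearMap.toContinuousLinearMap (dpf z q' t).mulVecLin -
          LinearMap.toContinuousLinearMap B0.mulVecLin‖ ≤ (np : ℝ) * c'
        rw [hsub]
        exact opNorm_mulVecLin_le _ c' hc' (hB0e q' hqt))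
      (convex_closedBall _ _) (mem_closedBall_self hB0) (mem_closedBall_iff_norm.mpr hq)
    have heq : f z q t - B0 *ᵥ q - (f z p t - B0 *ᵥ p) =
        f z q t - f z p t - B0 *ᵥ (q - p) := by
      rw [Matrix.mulVec_sub]; abel
    rwa [heq] at key
  -- constants for the Grönwall estimate
  set K1 : ℝ := nx * M + 1 with hK1def
  have hK1 : 0 < K1 := by positivity
  set K2 : ℝ := np * M with hK2def
  have hK2 : 0 ≤ K2 := by positivity
  set K0 : ℝ := K2 / K1 * (exp (K1 * T) - 1) with hK0def
  have hexp1 : 1 ≤ exp (K1 * T) := by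
    rw [← exp_zero]; exact exp_le_exp.2 (by positivity)
  have hK0 : 0 ≤ K0 := mul_nonneg (div_nonneg hK2 hK1.le) (by linarith)
  set δ₁ : ℝ := min ε (ε / (2 * (K0 + 1))) with hδ₁def
  have hδ₁ : 0 < δ₁ := lt_min hε (by positivity)
  have hM0 : (0:ℝ) ≤ M := le_trans zero_le_one hM1
  -- the fundamental sensitivity estimate
  have hsens : ∀ q : Fin np → ℝ, ‖q - p‖ ≤ δ₁ → ∀ t ∈ Icc (0:ℝ) T,
      ‖x t q - x t p‖ ≤ K0 * ‖q - p‖ ∧ ‖x t q - x t p‖ ≤ ε := by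
    intro q hq
    have hqε : ‖q - p‖ ≤ ε := hq.trans (min_le_left _ _)
    have hyD : ∀ t ∈ Icc (0:ℝ) T, HasDerivAt (fun s => x s q - x s p)
        (f (x t q) q t - f (x t p) p t) t := fun t ht => (hsol q t ht).sub (hsol p t ht)
    have hy0 : x 0 q - x 0 p = 0 := by rw [hinit q, hinit p, sub_self]
    have hb : ∀ t ∈ Icc (0:ℝ) T, ‖x t q - x t p‖ ≤ ε →
        ‖f (x t q) q t - f (x t p) p t‖ ≤ K1 * ‖x t q - x t p‖ + K2 * ‖q - p‖ := by
      intro t ht hyt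
      have h1 : ‖f (x t q) q t - f (x t p) q t -
          (0 : Matrix (Fin nx) (Fin nx) ℝ) *ᵥ (x t q - x t p)‖
          ≤ (nx * M) * ‖x t q - x t p‖ := by
        refine hfx M ε hM0 t ht q hqε 0 ?_ le_rfl hε.le _ hyt
        intro w hw i j
        simpa using hMx w q t (hTubeMem w q t ht hw hqε) i j
      have h2 : ‖f (x t p) q t - f (x t p) p t -
          (0 : Matrix (Fin nx) (Fin np) ℝ) *ᵥ (q - p)‖
          ≤ (np * M) * ‖q - p‖ := by
        refine hfq M ε hM0 t ht (x t p) (by simp [hε.le]) 0 ?_ le_rfl hε.le q hqε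
        intro q' hq' i j
        simpa using hMp (x t p) q' t (hTubeMem (x t p) q' t ht (by simp [hε.le]) hq') i j
      rw [Matrix.zero_mulVec, sub_zero] at h1 h2
      have hsplit : f (x t q) q t - f (x t p) p t =
          (f (x t q) q t - f (x t p) q t) + (f (x t p) q t - f (x t p) p t) := by abel
      rw [hsplit]
      calc ‖(f (x t q) q t - f (x t p) q t) + (f (x t p) q t - f (x t p) p t)‖
          ≤ ‖f (x t q) q t - f (x t p) q t‖ + ‖f (x t p) q t - f (x t p) p t‖ := norm_add_le _ _
        _ ≤ (nx * M) * ‖x t q - x t p‖ + (np * M) * ‖q - p‖ := add_le_add h1 h2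
        _ ≤ K1 * ‖x t q - x t p‖ + K2 * ‖q - p‖ := by
            rw [hK1def, hK2def]
            nlinarith [norm_nonneg (x t q - x t p)]
    have hsmall : gronwallBound 0 K1 (K2 * ‖q - p‖) T < ε := by
      have h1 := gronwallBound_zero_le (K := K1) (c := K2 * ‖q - p‖) hK1
        (by positivity) (le_refl T)
      have h2 : K2 * ‖q - p‖ / K1 * (exp (K1 * T) - 1) = ‖q - p‖ * K0 := by
        rw [hK0def]; ring
      rw [h2] at h1
      have h3 : ‖q - p‖ ≤ ε / (2 * (K0 + 1)) := hq.trans (min_le_right _ _)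
      have h3' : ‖q - p‖ * (2 * (K0 + 1)) ≤ ε := (le_div_iff₀ (by positivity)).1 h3
      have h4 : ‖q - p‖ * K0 < ε := by nlinarith [norm_nonneg (q - p)]
      linarith
    have hGb := gronwall_tube _ _ T ε K1 (K2 * ‖q - p‖) hT.le hε hK1.le (by positivity)
      hyD hy0 hb hsmall
    intro t ht
    have h4 := hGb t ht
    refine ⟨?_, ?_⟩
    · calc ‖x t q - x t p‖ ≤ gronwallBound 0 K1 (K2 * ‖q - p‖) t := h4
        _ ≤ K2 * ‖q - p‖ / K1 * (exp (K1 * T) - 1) :=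
            gronwallBound_zero_le hK1 (by positivity) ht.2
        _ = K0 * ‖q - p‖ := by rw [hK0def]; ring
    · refine h4.trans ?_
      calc gronwallBound 0 K1 (K2 * ‖q - p‖) t
          ≤ gronwallBound 0 K1 (K2 * ‖q - p‖) T :=
            gronwallBound_mono_x hK1.le (by positivity) ht.2
        _ ≤ ε := hsmall.le
  -- bound on the adjoint state
  have hlamc : ContinuousOn lam (Icc (0:ℝ) T) := by
    apply continuousOn_pi.2
    intro j
    exact fun t ht => ((hlam t ht j).continuousAt).continuousWithinAt
  obtain ⟨Λ, hΛ1, hΛ⟩ : ∃ Λ : ℝ, 1 ≤ Λ ∧ ∀ t ∈ Icc (0:ℝ) T, ∀ i, |lam t i| ≤ Λ := by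
    obtain ⟨Λ0, hΛ0⟩ := isCompact_Icc.exists_bound_of_continuousOn hlamc
    exact ⟨max Λ0 1, le_max_right _ _, fun t ht i =>
      ((norm_le_pi_norm (lam t) i).trans (hΛ0 t ht)).trans (le_max_left _ _)⟩
  -- continuity facts along the trajectory
  have hγc : ContinuousOn (fun t => ((x t p, p, t) : (Fin nx → ℝ) × (Fin np → ℝ) × ℝ))
      (Icc (0:ℝ) T) := (hxc p).prodMk (continuousOn_const.prodMk continuous_id.continuousOn)
  have hDtraj : ContinuousOn (fun t => D (x t p, p, t)) (Icc (0:ℝ) T) :=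
    hDc.comp hγc (fun t ht => hUtraj t ht)
  have hAc : ∀ i j, ContinuousOn (fun t => dxf (x t p) p t i j) (Icc (0:ℝ) T) := by
    intro i j
    have ha : Continuous fun m : (Fin nx → Fin nx → ℝ) × (Fin nx → Fin np → ℝ) => m.1 i :=
      (continuous_apply i).comp continuous_fst
    have h1 : Continuous fun m : (Fin nx → Fin nx → ℝ) × (Fin nx → Fin np → ℝ) => m.1 i j :=
      (continuous_apply j).comp ha
    exact h1.comp_continuousOn hDtraj
  have hBc : ∀ i j, ContinuousOn (fun t => dpf (x t p) p t i j) (Icc (0:ℝ) T) := by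
    intro i j
    have ha : Continuous fun m : (Fin nx → Fin nx → ℝ) × (Fin nx → Fin np → ℝ) => m.2 i :=
      (continuous_apply i).comp continuous_snd
    have h1 : Continuous fun m : (Fin nx → Fin nx → ℝ) × (Fin nx → Fin np → ℝ) => m.2 i j :=
      (continuous_apply j).comp ha
    exact h1.comp_continuousOn hDtraj
  have hfc : ∀ q : Fin np → ℝ, ContinuousOn (fun t => f (x t q) q t) (Icc (0:ℝ) T) := by
    intro q
    obtain ⟨L, hL⟩ := hLip q
    have h2 : ContinuousOn (fun t => ((x t q, t) : (Fin nx → ℝ) × ℝ)) (Icc (0:ℝ) T) :=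
      (hxc q).prodMk continuous_id.continuousOn
    exact hL.continuousOn.comp h2 (fun t ht => ⟨mem_univ _, ht⟩)
  have hlamci : ∀ i, ContinuousOn (fun t => lam t i) (Icc (0:ℝ) T) :=
    fun i t ht => ((hlam t ht i).continuousAt).continuousWithinAt
  have hdotcont : ∀ V : ℝ → Fin nx → ℝ, (∀ i, ContinuousOn (fun t => V t i) (Icc (0:ℝ) T)) →
      ContinuousOn (fun t => lam t ⬝ᵥ V t) (Icc (0:ℝ) T) := by
    intro V hV
    have : ContinuousOn (fun t => ∑ i, lam t i * V t i) (Icc (0:ℝ) T) :=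
      continuousOn_finset_sum _ (fun i _ => (hlamci i).mul (hV i))
    exact this
  -- the integrand components
  have hVc : ∀ q : Fin np → ℝ, ∀ i, ContinuousOn (fun t =>
      (f (x t q) q t - f (x t p) p t - dxf (x t p) p t *ᵥ (x t q - x t p)) i)
      (Icc (0:ℝ) T) := by
    intro q i
    have h1 : ContinuousOn (fun t => f (x t q) q t i - f (x t p) p t i -
        ∑ j, dxf (x t p) p t i j * (x t q j - x t p j)) (Icc (0:ℝ) T) := by
      refine (((continuous_apply i).comp_continuousOn (hfc q)).sub
        ((continuous_apply i).comp_continuousOn (hfc p))).sub ?_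
      refine continuousOn_finset_sum _ (fun j _ => (hAc i j).mul ?_)
      exact ((continuous_apply j).comp_continuousOn (hxc q)).sub
        ((continuous_apply j).comp_continuousOn (hxc p))
    exact h1
  have hWc : ∀ v : Fin np → ℝ, ∀ i, ContinuousOn
      (fun t => (dpf (x t p) p t *ᵥ v) i) (Icc (0:ℝ) T) := by
    intro v i
    have h1 : ContinuousOn (fun t => ∑ j, dpf (x t p) p t i j * v j) (Icc (0:ℝ) T) :=
      continuousOn_finset_sum _ (fun j _ => (hBc i j).mul continuousOn_const)
    exact h1
  -- FTC identity via the adjoint equation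
  have hkey : ∀ q : Fin np → ℝ, lam T ⬝ᵥ (x T q - x T p) =
      ∫ t in (0:ℝ)..T, lam t ⬝ᵥ
        (f (x t q) q t - f (x t p) p t - dxf (x t p) p t *ᵥ (x t q - x t p)) := by
    intro q
    have hgderiv : ∀ t ∈ uIcc (0:ℝ) T, HasDerivAt (fun s => lam s ⬝ᵥ (x s q - x s p))
        (lam t ⬝ᵥ (f (x t q) q t - f (x t p) p t -
          dxf (x t p) p t *ᵥ (x t q - x t p))) t := by
      rw [uIcc_of_le hT.le]
      intro t ht
      have hyD : HasDerivAt (fun s => x s q - x s p)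
          (f (x t q) q t - f (x t p) p t) t := (hsol q t ht).sub (hsol p t ht)
      have hsum : HasDerivAt (fun s => ∑ i, lam s i * (x s q - x s p) i)
          (∑ i, (-((dxf (x t p) p t)ᵀ *ᵥ lam t) i * (x t q - x t p) i +
            lam t i * (f (x t q) q t - f (x t p) p t) i)) t := by
        refine HasDerivAt.fun_sum (fun i _ => (hlam t ht i).mul (hasDerivAt_pi.1 hyD i))
      have heq := dot_aux (dxf (x t p) p t) (lam t) (x t q - x t p)
        (f (x t q) q t - f (x t p) p t)
      rw [heq] at hsum
      exact hsum
    have hg'int : IntervalIntegrable (fun t => lam t ⬝ᵥ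
        (f (x t q) q t - f (x t p) p t - dxf (x t p) p t *ᵥ (x t q - x t p)))
        MeasureTheory.volume 0 T := by
      apply ContinuousOn.intervalIntegrable
      rw [uIcc_of_le hT.le]
      exact hdotcont _ (hVc q)
    have hFTC := intervalIntegral.integral_eq_sub_of_hasDerivAt hgderiv hg'int
    have hg0 : lam 0 ⬝ᵥ (x 0 q - x 0 p) = 0 := by
      rw [hinit q, hinit p, sub_self, dotProduct_zero]
    rw [hg0, sub_zero] at hFTC
    exact hFTC.symm
  -- the candidate gradient
  set w : Fin np → ℝ := fun j => ∫ t in (0:ℝ)..T, ((dpf (x t p) p t)ᵀ *ᵥ lam t) j with hwdef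
  have hBint : ∀ j, IntervalIntegrable (fun t => ((dpf (x t p) p t)ᵀ *ᵥ lam t) j)
      MeasureTheory.volume 0 T := by
    intro j
    apply ContinuousOn.intervalIntegrable
    rw [uIcc_of_le hT.le]
    have h1 : ContinuousOn (fun t => ∑ i, dpf (x t p) p t i j * lam t i) (Icc (0:ℝ) T) :=
      continuousOn_finset_sum _ (fun i _ => (hBc i j).mul (hlamci i))
    exact h1
  have hwdot : ∀ v : Fin np → ℝ, w ⬝ᵥ v =
      ∫ t in (0:ℝ)..T, lam t ⬝ᵥ (dpf (x t p) p t *ᵥ v) := by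
    intro v
    have h1 : ∀ t, lam t ⬝ᵥ (dpf (x t p) p t *ᵥ v) =
        ∑ j, ((dpf (x t p) p t)ᵀ *ᵥ lam t) j * v j := by
      intro t
      rw [Matrix.dotProduct_mulVec, ← Matrix.mulVec_transpose]
      rfl
    simp_rw [h1]
    rw [intervalIntegral.integral_finset_sum]
    · refine (Finset.sum_congr rfl fun j _ => ?_)
      rw [← intervalIntegral.integral_mul_const]
    · intro j _
      exact (hBint j).mul_const (v j)
  have hlBint : ∀ v : Fin np → ℝ, IntervalIntegrable
      (fun t => lam t ⬝ᵥ (dpf (x t p) p t *ᵥ v)) MeasureTheory.volume 0 T := by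
    intro v
    apply ContinuousOn.intervalIntegrable
    rw [uIcc_of_le hT.le]
    exact hdotcont _ (hWc v)
  have hkey2 : ∀ q : Fin np → ℝ, lam T ⬝ᵥ (x T q - x T p) - w ⬝ᵥ (q - p) =
      ∫ t in (0:ℝ)..T, lam t ⬝ᵥ
        (f (x t q) q t - f (x t p) p t - dxf (x t p) p t *ᵥ (x t q - x t p) -
          dpf (x t p) p t *ᵥ (q - p)) := by
    intro q
    have hg'int : IntervalIntegrable (fun t => lam t ⬝ᵥ
        (f (x t q) q t - f (x t p) p t - dxf (x t p) p t *ᵥ (x t q - x t p)))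
        MeasureTheory.volume 0 T := by
      apply ContinuousOn.intervalIntegrable
      rw [uIcc_of_le hT.le]
      exact hdotcont _ (hVc q)
    rw [hkey q, hwdot (q - p), ← intervalIntegral.integral_sub hg'int (hlBint (q - p))]
    refine intervalIntegral.integral_congr (fun t _ => ?_)
    rw [← dotProduct_sub]
  -- dot product bound with the adjoint state
  have hdot : ∀ t ∈ Icc (0:ℝ) T, ∀ r : Fin nx → ℝ, |lam t ⬝ᵥ r| ≤ (nx * Λ) * ‖r‖ := by
    intro t ht r
    calc |∑ i, lam t i * r i| ≤ ∑ i, |lam t i * r i| := Finset.abs_sum_le_sum_abs _ _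
      _ ≤ ∑ _i : Fin nx, Λ * ‖r‖ := by
          refine Finset.sum_le_sum fun i _ => ?_
          rw [abs_mul]
          exact mul_le_mul (hΛ t ht i) (norm_le_pi_norm r i) (abs_nonneg _)
            (le_trans zero_le_one hΛ1)
      _ = (nx * Λ) * ‖r‖ := by simp [Finset.sum_const, mul_assoc]
  -- the candidate derivative as a continuous linear map
  set Gl : (Fin np → ℝ) →ₗ[ℝ] ℝ :=
    { toFun := fun v => w ⬝ᵥ v,
      map_add' := fun a b => by simp [dotProduct_add],
      map_smul' := fun m a => by simp [dotProduct_smul] } with hGldef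
  set G : (Fin np → ℝ) →L[ℝ] ℝ := LinearMap.toContinuousLinearMap Gl with hGdef
  have hCd : HasFDerivAt C (fderiv ℝ C (x T p)) (x T p) :=
    (hC.differentiable (by simp)).differentiableAt.hasFDerivAt
  set L := fderiv ℝ C (x T p) with hLdef
  have hLlam : ∀ v : Fin nx → ℝ, L v = lam T ⬝ᵥ v := by
    intro v
    have hv : v = ∑ i, v i • (Pi.single i (1:ℝ) : Fin nx → ℝ) := by
      funext k
      simp [Pi.single_apply]
    calc L v = L (∑ i, v i • (Pi.single i (1:ℝ) : Fin nx → ℝ)) := by rw [← hv]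
      _ = ∑ i, v i • L (Pi.single i 1) := by rw [map_sum]; simp
      _ = ∑ i, lam T i * v i := by
          refine Finset.sum_congr rfl fun i _ => ?_
          rw [← hlamT i]
          simp [mul_comm]
      _ = lam T ⬝ᵥ v := rfl
  -- the quantity controlling the second error term
  set Q : ℝ := T * (nx * Λ) * (nx * K0 + np) with hQdef
  have hQ0 : 0 ≤ Q := by
    have h1 : (0:ℝ) ≤ nx * K0 + np := by positivity
    have h2 : (0:ℝ) ≤ nx * Λ := by positivity
    exact mul_nonneg (mul_nonneg hT.le h2) h1
  -- the main differentiability statement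
  have hmain : HasFDerivAt (fun q => C (x T q)) G p := by
    rw [hasFDerivAt_iff_isLittleO_nhds_zero, Asymptotics.isLittleO_iff]
    intro c hc
    set c₁ : ℝ := c / (2 * (K0 + 1)) with hc₁def
    have hc₁ : 0 < c₁ := div_pos hc (by linarith only [hK0])
    have hClo := hCd.isLittleO
    rw [Asymptotics.isLittleO_iff] at hClo
    obtain ⟨η₁, hη₁, hC1⟩ := Metric.eventually_nhds_iff.1 (hClo hc₁)
    set c₂ : ℝ := c / (2 * (Q + 1)) with hc₂def
    have hc₂ : 0 < c₂ := div_pos hc (by linarith only [hQ0])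
    obtain ⟨η₂, hη₂, hη₂ε, hmod₂⟩ := hmod c₂ hc₂
    set δ' : ℝ := min δ₁ (min (η₂ / (K0 + 1)) (min η₂ (η₁ / (2 * (K0 + 1))))) with hδ'def
    have hδ'pos : 0 < δ' := by
      refine lt_min hδ₁ (lt_min (div_pos hη₂ (by linarith only [hK0])) (lt_min hη₂
        (div_pos hη₁ (by linarith only [hK0]))))
    filter_upwards [Metric.closedBall_mem_nhds (0 : Fin np → ℝ) hδ'pos] with h hh
    rw [mem_closedBall_zero_iff] at hh
    set q : Fin np → ℝ := p + h with hqdef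
    have hqp : q - p = h := by rw [hqdef]; abel
    have hd1 : ‖q - p‖ ≤ δ₁ := by rw [hqp]; exact hh.trans (min_le_left _ _)
    have hsens' := hsens q hd1
    have hhη₂ : ‖h‖ ≤ η₂ / (K0 + 1) :=
      hh.trans ((min_le_right _ _).trans (min_le_left _ _))
    have hhη₂' : ‖h‖ ≤ η₂ :=
      hh.trans ((min_le_right _ _).trans ((min_le_right _ _).trans (min_le_left _ _)))
    have hhη₁ : ‖h‖ ≤ η₁ / (2 * (K0 + 1)) :=
      hh.trans ((min_le_right _ _).trans ((min_le_right _ _).trans (min_le_right _ _)))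
    have hqη : ‖q - p‖ ≤ η₂ := by rw [hqp]; exact hhη₂'
    have hyη : ∀ t ∈ Icc (0:ℝ) T, ‖x t q - x t p‖ ≤ η₂ := by
      intro t ht
      have h1 := (hsens' t ht).1
      rw [hqp] at h1
      have h2 : K0 * ‖h‖ ≤ η₂ := by
        have h3 := mul_le_mul_of_nonneg_left hhη₂ hK0
        have h4 : K0 * (η₂ / (K0 + 1)) ≤ η₂ := arith2 hK0 hη₂
        exact h3.trans h4
      exact h1.trans h2
    have hyTK : ‖x T q - x T p‖ ≤ K0 * ‖h‖ := by
      have h1 := (hsens' T ⟨hT.le, le_refl T⟩).1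
      rwa [hqp] at h1
    have hbound1 : ‖C (x T q) - C (x T p) - L (x T q - x T p)‖ ≤ c₁ * (K0 * ‖h‖) := by
      have hdistT : dist (x T q) (x T p) < η₁ := by
        rw [dist_eq_norm]
        have h6 := mul_le_mul_of_nonneg_left hhη₁ hK0
        have h7 : K0 * (η₁ / (2 * (K0 + 1))) < η₁ := arith1 hK0 hη₁
        exact lt_of_le_of_lt hyTK (lt_of_le_of_lt h6 h7)
      exact (hC1 hdistT).trans (mul_le_mul_of_nonneg_left hyTK hc₁.le)
    have hbound2 : ‖lam T ⬝ᵥ (x T q - x T p) - w ⬝ᵥ (q - p)‖ ≤ c₂ * Q * ‖h‖ := by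
      rw [hkey2 q]
      have hper : ∀ t ∈ Set.uIoc (0:ℝ) T,
          ‖lam t ⬝ᵥ (f (x t q) q t - f (x t p) p t -
            dxf (x t p) p t *ᵥ (x t q - x t p) - dpf (x t p) p t *ᵥ (q - p))‖ ≤
          (nx * Λ) * ((c₂ * (nx * K0 + np)) * ‖h‖) := by
        intro t ht'
        have ht : t ∈ Icc (0:ℝ) T := by
          rw [Set.uIoc_of_le hT.le] at ht'
          exact ⟨ht'.1.le, ht'.2⟩
        have hyt := hyη t ht
        have hytK : ‖x t q - x t p‖ ≤ K0 * ‖h‖ := by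
          have h1 := (hsens' t ht).1
          rwa [hqp] at h1
        have hr1 : ‖f (x t q) q t - f (x t p) q t -
            dxf (x t p) p t *ᵥ (x t q - x t p)‖ ≤ (nx * c₂) * ‖x t q - x t p‖ := by
          refine hfx c₂ η₂ hc₂.le t ht q (hqη.trans hη₂ε) (dxf (x t p) p t) ?_ hη₂ε hη₂.le
            _ hyt
          intro w' hw' i j
          exact (hmod₂ t ht w' hw' q hqη).1 i j
        have hr2 : ‖f (x t p) q t - f (x t p) p t -
            dpf (x t p) p t *ᵥ (q - p)‖ ≤ (np * c₂) * ‖q - p‖ := by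
          refine hfq c₂ η₂ hc₂.le t ht (x t p) (by simp [hε.le]) (dpf (x t p) p t) ?_
            hη₂ε hη₂.le q hqη
          intro q' hq' i j
          exact (hmod₂ t ht (x t p) (by simp [hη₂.le]) q' hq').2 i j
        have hrsplit : f (x t q) q t - f (x t p) p t -
            dxf (x t p) p t *ᵥ (x t q - x t p) - dpf (x t p) p t *ᵥ (q - p) =
            (f (x t q) q t - f (x t p) q t - dxf (x t p) p t *ᵥ (x t q - x t p)) +
            (f (x t p) q t - f (x t p) p t - dpf (x t p) p t *ᵥ (q - p)) := by abel
        have hrnorm : ‖f (x t q) q t - f (x t p) p t -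
            dxf (x t p) p t *ᵥ (x t q - x t p) - dpf (x t p) p t *ᵥ (q - p)‖ ≤
            (c₂ * (nx * K0 + np)) * ‖h‖ := by
          rw [hrsplit]
          refine (norm_add_le _ _).trans ?_
          have e1 : (nx * c₂) * ‖x t q - x t p‖ ≤ (nx * c₂) * (K0 * ‖h‖) :=
            mul_le_mul_of_nonneg_left hytK (mul_nonneg (by positivity) hc₂.le)
          have e2 : (np * c₂) * ‖q - p‖ = (np * c₂) * ‖h‖ := by rw [hqp]
          calc ‖f (x t q) q t - f (x t p) q t - dxf (x t p) p t *ᵥ (x t q - x t p)‖ +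
              ‖f (x t p) q t - f (x t p) p t - dpf (x t p) p t *ᵥ (q - p)‖
              ≤ (nx * c₂) * ‖x t q - x t p‖ + (np * c₂) * ‖q - p‖ := add_le_add hr1 hr2
            _ ≤ (nx * c₂) * (K0 * ‖h‖) + (np * c₂) * ‖h‖ := by
                rw [e2]; exact add_le_add e1 le_rfl
            _ = (c₂ * (nx * K0 + np)) * ‖h‖ := by ring
        have h9 := hdot t ht (f (x t q) q t - f (x t p) p t -
            dxf (x t p) p t *ᵥ (x t q - x t p) - dpf (x t p) p t *ᵥ (q - p))
        rw [Real.norm_eq_abs]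
        refine h9.trans ?_
        exact mul_le_mul_of_nonneg_left hrnorm
          (mul_nonneg (by positivity) (le_trans zero_le_one hΛ1))
      have h10 := intervalIntegral.norm_integral_le_of_norm_le_const hper
      have h11 : (nx * Λ) * ((c₂ * (nx * K0 + np)) * ‖h‖) * |T - 0| = c₂ * Q * ‖h‖ := by
        rw [sub_zero, abs_of_pos hT, hQdef]
        ring
      exact h10.trans_eq h11
    have hsplit2 : C (x T q) - C (x T p) - G h =
        (C (x T q) - C (x T p) - L (x T q - x T p)) +
        (lam T ⬝ᵥ (x T q - x T p) - w ⬝ᵥ (q - p)) := by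
      have h1 : L (x T q - x T p) = lam T ⬝ᵥ (x T q - x T p) := hLlam _
      have h2 : G h = w ⬝ᵥ (q - p) := by rw [hqp]; rfl
      rw [← h1, h2]; ring
    calc ‖C (x T q) - C (x T p) - G h‖
        = ‖(C (x T q) - C (x T p) - L (x T q - x T p)) +
          (lam T ⬝ᵥ (x T q - x T p) - w ⬝ᵥ (q - p))‖ := by rw [hsplit2]
      _ ≤ ‖C (x T q) - C (x T p) - L (x T q - x T p)‖ +
          ‖lam T ⬝ᵥ (x T q - x T p) - w ⬝ᵥ (q - p)‖ := norm_add_le _ _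
      _ ≤ c₁ * (K0 * ‖h‖) + c₂ * Q * ‖h‖ := add_le_add hbound1 hbound2
      _ = (c₁ * K0) * ‖h‖ + (c₂ * Q) * ‖h‖ := by ring
      _ ≤ c * ‖h‖ := by
          have e1 : c₁ * K0 ≤ c / 2 := by rw [hc₁def]; exact arith3 hc.le hK0
          have e2 : c₂ * Q ≤ c / 2 := by rw [hc₂def]; exact arith3 hc.le hQ0
          exact arith5 e1 e2 (norm_nonneg h)
  refine ⟨hmain.differentiableAt, fun j => ?_⟩
  rw [hmain.fderiv]
  show w ⬝ᵥ Pi.single j 1 = _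
  rw [dotProduct_single, mul_one, hwdef]
end

section
/- Suppose φ : ℝ^{n_p} × ℝ^{d'} → ℝ^{d'} is such that the Jacobian d_γ φ is invertible at a point (p₀, γ₀) with φ(p₀, γ₀) = 0, so that near p₀ the equation φ(p, γ) = 0 defines γ as a function γ(p) of p. For a given differentiable function C : ℝ^{n_p} × ℝ^{d'} → ℝ, define Φ(p) := C(p, γ(p)) and the Lagrangian L(p, γ, λ) := C(p, γ) + ⟨φ(p, γ), λ⟩. Then the Euclidean gradient of Φ at p₀ is ∂Φ(p₀) = ∂_p L(p₀, γ₀, λ₀), where γ₀ = γ(p₀) and λ₀ ∈ ℝ^{d'} are uniquely determined by the equations 0 = ∂_λ L(p₀, γ₀, λ₀) = φ(p₀, γ₀) and 0 = ∂_γ L(p₀, γ₀, λ₀), the latter being equivalent to ∂_γ C(p₀, γ₀) = − d_γ φ(p₀, γ₀)^⊤ λ₀. -/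
/-!
Differentiating `f (x, g x) = 0` gives `∂_y f ∘ g' = -∂_x f`. If the multiplier `μ` solves the
adjoint equation `∂_y C = -μ ∘ ∂_y f`, the derivative `g'` of the implicit function drops out of
the chain rule `DΦ = ∂_x C + ∂_y C ∘ g'`, because `∂_y C ∘ g' = -μ ∘ ∂_y f ∘ g' = μ ∘ ∂_x f`;
hence `DΦ = ∂_x C + μ ∘ ∂_x f = ∂_x L`. In coordinates, with `μ = ⟨·, λ⟩` and `∂_γ φ = J`, the
adjoint equation reads `∂_γ C = -Jᵀ λ`, which has a unique solution since `J` is invertible.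
-/

open Matrix ContinuousLinearMap Topology

section PartialDerivatives

variable {𝕜 E F G H : Type*} [NontriviallyNormedField 𝕜] [NormedAddCommGroup E]
  [NormedSpace 𝕜 E] [NormedAddCommGroup F] [NormedSpace 𝕜 F] [NormedAddCommGroup G]
  [NormedSpace 𝕜 G] [NormedAddCommGroup H] [NormedSpace 𝕜 H]
  {f : E → F → G} {D : E × F →L[𝕜] G} {x : E} {y : F}

theorem HasFDerivAt.partial_fst (h : HasFDerivAt (fun u : E × F => f u.1 u.2) D (x, y)) :
    HasFDerivAt (fun x' => f x' y) (D.comp (inl 𝕜 E F)) x :=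
  HasFDerivAt.comp (f := fun x' => (x', y)) x h (hasFDerivAt_prodMk_left x y)

theorem HasFDerivAt.partial_snd (h : HasFDerivAt (fun u : E × F => f u.1 u.2) D (x, y)) :
    HasFDerivAt (fun y' => f x y') (D.comp (inr 𝕜 E F)) y :=
  h.comp y (hasFDerivAt_prodMk_right x y)

variable {g : E → F} {g' : E →L[𝕜] F}

theorem HasFDerivAt.comp_graph (h : HasFDerivAt (fun u : E × F => f u.1 u.2) D (x, g x))
    (hg : HasFDerivAt g g' x) :
    HasFDerivAt (fun x' => f x' (g x')) (D.comp (inl 𝕜 E F) + (D.comp (inr 𝕜 E F)).comp g') x := by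
  refine (h.comp x ((hasFDerivAt_id x).prodMk hg)).congr_fderiv ?_
  ext w
  simp [← map_add]

theorem HasFDerivAt.partial_snd_comp_eq_neg_of_eventually_eq_zero
    (h : HasFDerivAt (fun u : E × F => f u.1 u.2) D (x, g x)) (hg : HasFDerivAt g g' x)
    (hroot : ∀ᶠ x' in 𝓝 x, f x' (g x') = 0) :
    (D.comp (inr 𝕜 E F)).comp g' = -D.comp (inl 𝕜 E F) :=
  eq_neg_of_add_eq_zero_right <|
    (h.comp_graph hg).unique ((hasFDerivAt_const 0 x).congr_of_eventuallyEq hroot)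

theorem HasFDerivAt.comp_graph_of_adjoint {C : E → F → H} {DC : E × F →L[𝕜] H}
    {μ : G →L[𝕜] H} (hC : HasFDerivAt (fun u : E × F => C u.1 u.2) DC (x, g x))
    (h : HasFDerivAt (fun u : E × F => f u.1 u.2) D (x, g x)) (hg : HasFDerivAt g g' x)
    (hroot : ∀ᶠ x' in 𝓝 x, f x' (g x') = 0)
    (hμ : DC.comp (inr 𝕜 E F) = -μ.comp (D.comp (inr 𝕜 E F))) :
    HasFDerivAt (fun x' => C x' (g x')) (DC.comp (inl 𝕜 E F) + μ.comp (D.comp (inl 𝕜 E F))) x := by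
  convert hC.comp_graph hg using 2
  rw [hμ, neg_comp, comp_assoc, h.partial_snd_comp_eq_neg_of_eventually_eq_zero hg hroot,
    comp_neg, neg_neg]

end PartialDerivatives

theorem Matrix.existsUnique_mulVec_eq {R ι : Type*} [CommRing R] [Fintype ι] [DecidableEq ι]
    {A : Matrix ι ι R} (hA : IsUnit A) (b : ι → R) : ∃! x, A *ᵥ x = b :=
  Function.Bijective.existsUnique
    ⟨mulVec_injective_of_isUnit hA, mulVec_surjective_iff_isUnit.2 hA⟩ b

section DotProduct

variable {𝕜 ι : Type*} [NontriviallyNormedField 𝕜] [Fintype ι]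

def dotProductCLM (w : ι → 𝕜) : (ι → 𝕜) →L[𝕜] 𝕜 where
  toFun v := v ⬝ᵥ w
  map_add' u v := add_dotProduct u v w
  map_smul' c v := smul_dotProduct c v w
  cont := by fun_prop

theorem eq_neg_dotProductCLM_comp_of_apply_single [CompleteSpace 𝕜] [DecidableEq ι]
    {B : (ι → 𝕜) →L[𝕜] 𝕜} {J : Matrix ι ι 𝕜} {w : ι → 𝕜}
    (h : ∀ k, B (Pi.single k 1) = -(Jᵀ *ᵥ w) k) :
    B = -(dotProductCLM w).comp (LinearMap.toContinuousLinearMap J.mulVecLin) := by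
  refine ContinuousLinearMap.coe_injective <| (Pi.basisFun 𝕜 ι).ext fun k => ?_
  simp only [Pi.basisFun_apply, coe_coe, _root_.neg_apply, h, neg_inj]
  change (Jᵀ *ᵥ w) k = (J *ᵥ Pi.single k 1) ⬝ᵥ w
  rw [mulVec_transpose, mulVec_single_one, dotProduct_comm]
  rfl

end DotProduct

/-- **Gradient of an implicitly constrained objective via the Lagrangian.**
Let `φ(p, γ) = 0` define `γ = γ(p)` implicitly near `p₀` (the Jacobian `d_γ φ` being
invertible at `(p₀, γ₀)`), let `Φ(p) := C(p, γ(p))` and let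
`L(p, γ, λ) := C(p, γ) + ⟨φ(p, γ), λ⟩` be the Lagrangian. Then there is a unique `λ₀`
with `∂_γ C(p₀, γ₀) = − d_γ φ(p₀, γ₀)ᵀ λ₀` (equivalently `∂_γ L(p₀, γ₀, λ₀) = 0`), one has
`∂_λ L(p₀, γ₀, λ₀) = φ(p₀, γ₀) = 0`, and `∂Φ(p₀) = ∂_p L(p₀, γ₀, λ₀)`. -/
theorem lagrangian_gradient
    (np d : ℕ)
    (φ : (Fin np → ℝ) → (Fin d → ℝ) → (Fin d → ℝ))
    (hφ : ContDiff ℝ 1 (fun u : (Fin np → ℝ) × (Fin d → ℝ) => φ u.1 u.2))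
    (p₀ : Fin np → ℝ) (γ₀ : Fin d → ℝ)
    (hroot : φ p₀ γ₀ = 0)
    -- the Jacobian d_γ φ at (p₀, γ₀), assumed invertible
    (J : Matrix (Fin d) (Fin d) ℝ)
    (hJ : HasFDerivAt (fun γ' => φ p₀ γ') (LinearMap.toContinuousLinearMap J.mulVecLin) γ₀)
    (hJinv : IsUnit J)
    -- the implicit function γ(p) near p₀
    (γ : (Fin np → ℝ) → (Fin d → ℝ))
    (hγ₀ : γ p₀ = γ₀)
    (hγroot : ∀ᶠ q in nhds p₀, φ q (γ q) = 0)
    (hγdiff : DifferentiableAt ℝ γ p₀)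
    -- a differentiable objective C
    (C : (Fin np → ℝ) → (Fin d → ℝ) → ℝ)
    (hC : DifferentiableAt ℝ (fun u : (Fin np → ℝ) × (Fin d → ℝ) => C u.1 u.2) (p₀, γ₀)) :
    -- λ₀ is uniquely determined by ∂_γ C(p₀, γ₀) = − d_γ φ(p₀, γ₀)ᵀ λ₀
    (∃! lam₀ : Fin d → ℝ,
      ∀ k, fderiv ℝ (fun g => C p₀ g) γ₀ (Pi.single k 1) = -(Matrix.mulVec Jᵀ lam₀) k) ∧
    (∀ lam₀ : Fin d → ℝ,
      (∀ k, fderiv ℝ (fun g => C p₀ g) γ₀ (Pi.single k 1) = -(Matrix.mulVec Jᵀ lam₀) k) →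
      -- 0 = ∂_λ L(p₀, γ₀, λ₀) = φ(p₀, γ₀)
      (∀ k, fderiv ℝ (fun l : Fin d → ℝ => C p₀ γ₀ + ∑ r, φ p₀ γ₀ r * l r) lam₀
          (Pi.single k 1) = φ p₀ γ₀ k) ∧ φ p₀ γ₀ = 0 ∧
      -- 0 = ∂_γ L(p₀, γ₀, λ₀)
      (∀ k, fderiv ℝ (fun g => C p₀ g + ∑ r, φ p₀ g r * lam₀ r) γ₀ (Pi.single k 1) = 0) ∧
      -- the gradient of Φ(p) = C(p, γ(p)) at p₀ equals ∂_p L(p₀, γ₀, λ₀)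
      DifferentiableAt ℝ (fun q => C q (γ q)) p₀ ∧
      (∀ j, fderiv ℝ (fun q => C q (γ q)) p₀ (Pi.single j 1)
        = fderiv ℝ (fun q => C q γ₀ + ∑ r, φ q γ₀ r * lam₀ r) p₀ (Pi.single j 1))) := by
  obtain ⟨DC, hDC⟩ := hC
  obtain ⟨Dφ, hDφ⟩ := hφ.differentiable one_ne_zero (p₀, γ₀)
  have hDφ_snd : Dφ.comp (inr ℝ _ _) = LinearMap.toContinuousLinearMap J.mulVecLin :=
    hDφ.partial_snd.unique hJ
  have hCγ : fderiv ℝ (fun g => C p₀ g) γ₀ = DC.comp (inr ℝ _ _) := hDC.partial_snd.fderiv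
  simp only [hCγ]
  refine ⟨?_, fun lam₀ hlam => ?_⟩
  · refine (existsUnique_congr fun lam => ?_).2 (Matrix.existsUnique_mulVec_eq
      ((isUnit_transpose J).2 hJinv) (-fun k => DC.comp (inr ℝ _ _) (Pi.single k 1)))
    simp only [funext_iff, Pi.neg_apply]
    exact forall_congr' fun k => by rw [eq_comm, neg_eq_iff_eq_neg]
  set μ := dotProductCLM lam₀
  have hμ : DC.comp (inr ℝ _ _) = -μ.comp (Dφ.comp (inr ℝ _ _)) := by
    rw [hDφ_snd]; exact eq_neg_dotProductCLM_comp_of_apply_single hlam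
  have hLγ : HasFDerivAt (fun g => C p₀ g + ∑ r, φ p₀ g r * lam₀ r)
      (DC.comp (inr ℝ _ _) + μ.comp (Dφ.comp (inr ℝ _ _))) γ₀ :=
    hDC.partial_snd.add (μ.hasFDerivAt.comp γ₀ hDφ.partial_snd)
  have hLp : HasFDerivAt (fun q => C q γ₀ + ∑ r, φ q γ₀ r * lam₀ r)
      (DC.comp (inl ℝ _ _) + μ.comp (Dφ.comp (inl ℝ _ _))) p₀ :=
    hDC.partial_fst.add (μ.hasFDerivAt.comp p₀ hDφ.partial_fst)
  rw [← hγ₀] at hDC hDφ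
  have hΦ := hDC.comp_graph_of_adjoint hDφ hγdiff.hasFDerivAt hγroot hμ
  refine ⟨fun k => by simp [hroot], hroot, fun k => ?_, hΦ.differentiableAt, fun j => ?_⟩
  · rw [hLγ.fderiv, hμ, neg_add_cancel, _root_.zero_apply]
  · rw [hΦ.fderiv, hLp.fderiv]
end

section
/- Consider the discretization of ẋ = f(x, p, t), x(0) = x₀ by an s-stage Runge–Kutta method with coefficients a_{ij}, b_i ≠ 0, c_i and step sizes h_n = t_{n+1} − t_n satisfying h_n < 1 / (L · max_i Σ_j |a_{ij}|), producing iterates x_0, x_1, …, x_N with stages X_{n,i}. Let C : ℝ^{n_x} → ℝ be differentiable and Φ(p) := C(x_N(p)). Then the Euclidean gradient of Φ equals ∂Φ(p) = Σ_{n=0}^{N−1} h_n Σ_{i=1}^s b̄_i d_p f(X_{n,i}, p, t_n + c̄_i h_n)^⊤ Λ_{n,i}, where the discrete adjoint variables are given by λ_N := ∂C(x_N) and, backwards in n, λ_{n+1} = λ_n + h_n Σ_{i=1}^s b̄_i ℓ_{n,i}, ℓ_{n,i} = − d_x f(X_{n,i}, p, t_n + c̄_i h_n)^⊤ Λ_{n,i},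 Λ_{n,i} = λ_n + h_n Σ_{j=1}^s ā_{ij} ℓ_{n,j}; moreover this adjoint scheme is exactly the s-stage Runge–Kutta method with coefficients ā_{ij} = b_j − a_{ji} b_j / b_i, b̄_i = b_i, c̄_i = c_i applied to the continuous adjoint equation λ̇ = − d_x f(x, p, t)^⊤ λ. -/
open Matrix

lemma rk_step_alg (s : ℕ) (b : Fin s → ℝ) (a abar : Fin s → Fin s → ℝ)
    (hba : ∀ i j, b i * abar i j = b i * b j - a j i * b j)
    (h α : ℝ) (β γ g lk : Fin s → ℝ) (u : Fin s → Fin s → ℝ)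
    (hγ : ∀ i, γ i = -β i - h * ∑ j, a i j * u i j + g i)
    (hlk : ∀ i, lk i = γ i - h * ∑ j, abar i j * u j i) :
    α + h * ∑ i, b i * β i + h * ∑ i, b i * lk i
      + h * h * ∑ i, ∑ j, b i * b j * u i j
      = α + h * ∑ i, b i * g i := by
  have key : ∑ i, ∑ j, b i * (abar i j * u j i)
      = ∑ i, ∑ j, (b i * b j * u i j - b i * (a i j * u i j)) := by
    rw [Finset.sum_comm]
    refine Finset.sum_congr rfl fun i _ => Finset.sum_congr rfl fun j _ => ?_
    linear_combination u i j * hba j i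
  simp only [Finset.sum_sub_distrib] at key
  simp only [hlk, hγ]
  simp only [mul_sub, mul_add, mul_neg, Finset.sum_sub_distrib, Finset.sum_add_distrib,
    Finset.mul_sum, mul_left_comm _ h, Finset.sum_neg_distrib]
  have key2 := congrArg (fun z => h * h * z) key
  simp only [mul_sub, Finset.mul_sum] at key2
  simp only [Finset.mul_sum, ← mul_assoc] at key2 ⊢
  ring_nf at key2 ⊢
  linarith [key2]


lemma rk_joint (nx np : ℕ)
    (f : (Fin nx → ℝ) → (Fin np → ℝ) → ℝ → (Fin nx → ℝ))
    (hf : ContDiff ℝ 1 (fun u : (Fin nx → ℝ) × (Fin np → ℝ) × ℝ => f u.1 u.2.1 u.2.2))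
    (dxf : (Fin nx → ℝ) → (Fin np → ℝ) → ℝ → Matrix (Fin nx) (Fin nx) ℝ)
    (dpf : (Fin nx → ℝ) → (Fin np → ℝ) → ℝ → Matrix (Fin nx) (Fin np) ℝ)
    (hdxf : ∀ y q t, HasFDerivAt (fun y' => f y' q t)
      (LinearMap.toContinuousLinearMap (dxf y q t).mulVecLin) y)
    (hdpf : ∀ y q t, HasFDerivAt (fun q' => f y q' t)
      (LinearMap.toContinuousLinearMap (dpf y q t).mulVecLin) q)
    (y : Fin nx → ℝ) (q : Fin np → ℝ) (τ : ℝ) :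
    HasStrictFDerivAt (fun u : (Fin nx → ℝ) × (Fin np → ℝ) => f u.1 u.2 τ)
      ((LinearMap.toContinuousLinearMap (dxf y q τ).mulVecLin).comp
          (ContinuousLinearMap.fst ℝ (Fin nx → ℝ) (Fin np → ℝ)) +
        (LinearMap.toContinuousLinearMap (dpf y q τ).mulVecLin).comp
          (ContinuousLinearMap.snd ℝ (Fin nx → ℝ) (Fin np → ℝ))) (y, q) := by
  have hg : ContDiff ℝ 1 (fun u : (Fin nx → ℝ) × (Fin np → ℝ) => f u.1 u.2 τ) :=
    hf.comp (contDiff_fst.prodMk (contDiff_snd.prodMk contDiff_const))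
  have hsd := (hg.contDiffAt (x := (y, q))).hasStrictFDerivAt one_ne_zero
  have hD := hsd.hasFDerivAt
  set D := fderiv ℝ (fun u : (Fin nx → ℝ) × (Fin np → ℝ) => f u.1 u.2 τ) (y, q) with hDdef
  have h1 : HasFDerivAt (fun y' => f y' q τ)
      (D.comp ((ContinuousLinearMap.id ℝ (Fin nx → ℝ)).prod 0)) y :=
    hD.comp (f := fun y' : Fin nx → ℝ => (y', q)) y ((hasFDerivAt_id y).prodMk (hasFDerivAt_const q y))
  have e1 := h1.unique (hdxf y q τ)
  have h2 : HasFDerivAt (fun q' => f y q' τ)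
      (D.comp ((0 : (Fin np → ℝ) →L[ℝ] (Fin nx → ℝ)).prod (ContinuousLinearMap.id ℝ _))) q :=
    hD.comp (f := fun q' : Fin np → ℝ => (y, q')) q ((hasFDerivAt_const y q).prodMk (hasFDerivAt_id q))
  have e2 := h2.unique (hdpf y q τ)
  have hfinal : D = (LinearMap.toContinuousLinearMap (dxf y q τ).mulVecLin).comp
          (ContinuousLinearMap.fst ℝ (Fin nx → ℝ) (Fin np → ℝ)) +
        (LinearMap.toContinuousLinearMap (dpf y q τ).mulVecLin).comp
          (ContinuousLinearMap.snd ℝ (Fin nx → ℝ) (Fin np → ℝ)) := by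
    apply ContinuousLinearMap.ext
    intro u
    have hu : u = (u.1, 0) + (0, u.2) := by simp
    rw [ContinuousLinearMap.add_apply, ContinuousLinearMap.comp_apply,
      ContinuousLinearMap.comp_apply]
    conv_lhs => rw [hu]
    rw [map_add]
    have a1 : D (u.1, 0) = (dxf y q τ).mulVecLin u.1 := by
      have := congrFun (congrArg DFunLike.coe e1) u.1
      simpa using this
    have a2 : D (0, u.2) = (dpf y q τ).mulVecLin u.2 := by
      have := congrFun (congrArg DFunLike.coe e2) u.2
      simpa using this
    rw [a1, a2]; simp
  rw [← hfinal]; exact hsd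

set_option maxHeartbeats 1000000 in
lemma rk_stage_diff
    (nx np s : ℕ)
    (f : (Fin nx → ℝ) → (Fin np → ℝ) → ℝ → (Fin nx → ℝ))
    (L : ℝ) (hL : 0 < L)
    (hLip : ∀ (q : Fin np → ℝ) (t : ℝ), LipschitzWith (Real.toNNReal L) (fun y => f y q t))
    (hf : ContDiff ℝ 1 (fun u : (Fin nx → ℝ) × (Fin np → ℝ) × ℝ => f u.1 u.2.1 u.2.2))
    (dxf : (Fin nx → ℝ) → (Fin np → ℝ) → ℝ → Matrix (Fin nx) (Fin nx) ℝ)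
    (dpf : (Fin nx → ℝ) → (Fin np → ℝ) → ℝ → Matrix (Fin nx) (Fin np) ℝ)
    (hdxf : ∀ y q t, HasFDerivAt (fun y' => f y' q t)
      (LinearMap.toContinuousLinearMap (dxf y q t).mulVecLin) y)
    (hdpf : ∀ y q t, HasFDerivAt (fun q' => f y q' t)
      (LinearMap.toContinuousLinearMap (dpf y q t).mulVecLin) q)

    (a : Fin s → Fin s → ℝ) (τ : Fin s → ℝ)
    (h : ℝ) (hh : 0 < h) (A : ℝ) (hA0 : 0 ≤ A) (hA : ∀ i, ∑ j, |a i j| ≤ A)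
    (hθ : L * A * h < 1)
    (p₀ : Fin np → ℝ) (xb : (Fin np → ℝ) → Fin nx → ℝ)
    (K : (Fin np → ℝ) → Fin s → Fin nx → ℝ)
    (hK : ∀ q i, K q i = f (xb q + h • ∑ j, a i j • K q j) q (τ i))
    (Dx : (Fin np → ℝ) →L[ℝ] (Fin nx → ℝ))
    (hDx : HasStrictFDerivAt xb Dx p₀) :
    ∃ D : (Fin np → ℝ) →L[ℝ] (Fin s → Fin nx → ℝ), HasStrictFDerivAt K D p₀ := by
  classical
  -- basic estimates
  have hfLip : ∀ (q : Fin np → ℝ) (τ' : ℝ) (y y' : Fin nx → ℝ),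
      ‖f y q τ' - f y' q τ'‖ ≤ L * ‖y - y'‖ := by
    intro q τ' y y'
    have := (hLip q τ').dist_le_mul y y'
    rwa [dist_eq_norm, dist_eq_norm, Real.coe_toNNReal L hL.le] at this
  have hAle : ∀ (y : Fin nx → ℝ) (q : Fin np → ℝ) (τ' : ℝ) (u : Fin nx → ℝ),
      ‖(LinearMap.toContinuousLinearMap (dxf y q τ').mulVecLin) u‖ ≤ L * ‖u‖ := by
    intro y q τ' u
    have hn : ‖LinearMap.toContinuousLinearMap (dxf y q τ').mulVecLin‖ ≤ L := by
      simpa [Real.coe_toNNReal L hL.le] using (hdxf y q τ').le_of_lipschitz (hLip q τ')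
    calc ‖(LinearMap.toContinuousLinearMap (dxf y q τ').mulVecLin) u‖
        ≤ ‖LinearMap.toContinuousLinearMap (dxf y q τ').mulVecLin‖ * ‖u‖ :=
          ContinuousLinearMap.le_opNorm _ u
      _ ≤ L * ‖u‖ := mul_le_mul_of_nonneg_right hn (norm_nonneg u)
  have hsum : ∀ (i : Fin s) (g : Fin s → Fin nx → ℝ) (Cg : ℝ), 0 ≤ Cg →
      (∀ j, ‖g j‖ ≤ Cg) → ‖∑ j, a i j • g j‖ ≤ A * Cg := by
    intro i g Cg hCg hg
    calc ‖∑ j, a i j • g j‖ ≤ ∑ j, ‖a i j • g j‖ := norm_sum_le _ _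
      _ = ∑ j, |a i j| * ‖g j‖ := by simp [norm_smul]
      _ ≤ ∑ j, |a i j| * Cg := Finset.sum_le_sum fun j _ =>
          mul_le_mul_of_nonneg_left (hg j) (abs_nonneg _)
      _ = (∑ j, |a i j|) * Cg := (Finset.sum_mul _ _ _).symm
      _ ≤ A * Cg := mul_le_mul_of_nonneg_right (hA i) hCg
  -- uniqueness of stage vectors
  have huniq : ∀ (q : Fin np → ℝ) (K1 K2 : Fin s → Fin nx → ℝ),
      (∀ i, K1 i = f (xb q + h • ∑ j, a i j • K1 j) q (τ i)) →
      (∀ i, K2 i = f (xb q + h • ∑ j, a i j • K2 j) q (τ i)) → K1 = K2 := by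
    intro q K1 K2 h1 h2
    have hle : ∀ i, ‖K1 i - K2 i‖ ≤ L * A * h * ‖K1 - K2‖ := by
      intro i
      rw [h1 i, h2 i]
      have hdiff : (xb q + h • ∑ j, a i j • K1 j) - (xb q + h • ∑ j, a i j • K2 j)
          = h • ∑ j, a i j • (K1 j - K2 j) := by
        rw [add_sub_add_left_eq_sub, ← smul_sub, ← Finset.sum_sub_distrib]
        congr 1
        exact Finset.sum_congr rfl fun j _ => (smul_sub _ _ _).symm
      calc ‖f _ q (τ i) - f _ q (τ i)‖ ≤ L * ‖(xb q + h • ∑ j, a i j • K1 j)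
            - (xb q + h • ∑ j, a i j • K2 j)‖ := hfLip _ _ _ _
        _ = L * (h * ‖∑ j, a i j • (K1 j - K2 j)‖) := by
            rw [hdiff, norm_smul, Real.norm_eq_abs, abs_of_pos hh]
        _ ≤ L * (h * (A * ‖K1 - K2‖)) := by
            refine mul_le_mul_of_nonneg_left (mul_le_mul_of_nonneg_left ?_ hh.le) hL.le
            exact hsum i _ _ (norm_nonneg _) fun j => norm_le_pi_norm (K1 - K2) j
        _ = L * A * h * ‖K1 - K2‖ := by ring
    have hd : ‖K1 - K2‖ ≤ L * A * h * ‖K1 - K2‖ := by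
      exact (pi_norm_le_iff_of_nonneg (by positivity)).mpr fun i => hle i
    have : ‖K1 - K2‖ ≤ 0 := by nlinarith [norm_nonneg (K1 - K2)]
    exact sub_eq_zero.mp (norm_le_zero_iff.mp this)
  -- the continuous linear maps appearing in the derivative
  set Y : Fin s → Fin nx → ℝ := fun i => xb p₀ + h • ∑ j, a i j • K p₀ j with hY
  set Ai : Fin s → ((Fin nx → ℝ) →L[ℝ] (Fin nx → ℝ)) :=
    fun i => LinearMap.toContinuousLinearMap (dxf (Y i) p₀ (τ i)).mulVecLin with hAi
  set Pi' : Fin s → ((Fin np → ℝ) →L[ℝ] (Fin nx → ℝ)) :=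
    fun i => LinearMap.toContinuousLinearMap (dpf (Y i) p₀ (τ i)).mulVecLin with hPi
  set M : (Fin s → Fin nx → ℝ) →L[ℝ] (Fin s → Fin nx → ℝ) :=
    ContinuousLinearMap.pi (fun i => h • ∑ j, a i j •
      ((Ai i).comp (ContinuousLinearMap.proj j))) with hM
  set B : (Fin np → ℝ) →L[ℝ] (Fin s → Fin nx → ℝ) :=
    ContinuousLinearMap.pi (fun i => (Ai i).comp Dx + Pi' i) with hB
  have hMapp : ∀ (w : Fin s → Fin nx → ℝ) (i : Fin s),
      M w i = h • ∑ j, a i j • (Ai i (w j)) := by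
    intro w i
    simp [hM]
  have hMle : ∀ w : Fin s → Fin nx → ℝ, ‖M w‖ ≤ (L * A * h) * ‖w‖ := by
    intro w
    refine (pi_norm_le_iff_of_nonneg (by positivity)).mpr fun i => ?_
    rw [hMapp w i]
    calc ‖h • ∑ j, a i j • (Ai i (w j))‖ = h * ‖∑ j, a i j • (Ai i (w j))‖ := by
          rw [norm_smul, Real.norm_eq_abs, abs_of_pos hh]
      _ ≤ h * (A * (L * ‖w‖)) := by
          refine mul_le_mul_of_nonneg_left ?_ hh.le
          refine hsum i _ _ (by positivity) fun j => ?_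
          calc ‖Ai i (w j)‖ ≤ L * ‖w j‖ := hAle _ _ _ _
            _ ≤ L * ‖w‖ := mul_le_mul_of_nonneg_left (norm_le_pi_norm w j) hL.le
      _ = L * A * h * ‖w‖ := by ring
  -- invertibility of 1 - M
  set mlin : (Fin s → Fin nx → ℝ) →ₗ[ℝ] (Fin s → Fin nx → ℝ) :=
    LinearMap.id - (M : (Fin s → Fin nx → ℝ) →ₗ[ℝ] (Fin s → Fin nx → ℝ)) with hmlin
  have hmlinapp : ∀ w, mlin w = w - M w := by intro w; simp [hmlin]
  have hinj : Function.Injective mlin := by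
    intro w1 w2 hw
    have hww : (w1 - w2) - M (w1 - w2) = 0 := by
      rw [hmlinapp, hmlinapp] at hw
      rw [map_sub, show w1 - w2 - (M w1 - M w2) = (w1 - M w1) - (w2 - M w2) by abel, hw,
        sub_self]
    have hq : w1 - w2 = M (w1 - w2) := sub_eq_zero.mp hww
    have hn : ‖w1 - w2‖ ≤ L * A * h * ‖w1 - w2‖ := by
      conv_lhs => rw [hq]
      exact hMle _
    have : ‖w1 - w2‖ ≤ 0 := by nlinarith [norm_nonneg (w1 - w2)]
    exact sub_eq_zero.mp (norm_le_zero_iff.mp this)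
  have hbij : Function.Bijective mlin :=
    ⟨hinj, (LinearMap.injective_iff_surjective (f := mlin)).mp hinj⟩
  set e1 : (Fin s → Fin nx → ℝ) ≃ₗ[ℝ] (Fin s → Fin nx → ℝ) :=
    LinearEquiv.ofBijective mlin hbij with he1
  have he1app : ∀ w, e1 w = w - M w := by
    intro w; rw [← hmlinapp w]; rfl
  -- the full linear equivalence on the product space
  set Tlin : ((Fin np → ℝ) × (Fin s → Fin nx → ℝ)) →ₗ[ℝ]
      ((Fin np → ℝ) × (Fin s → Fin nx → ℝ)) :=
    LinearMap.prod (LinearMap.fst ℝ _ _)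
      (LinearMap.snd ℝ _ _ - (B : (Fin np → ℝ) →ₗ[ℝ] _).comp (LinearMap.fst ℝ _ _)
        - (M : (Fin s → Fin nx → ℝ) →ₗ[ℝ] _).comp (LinearMap.snd ℝ _ _)) with hTlin
  have hTlinapp : ∀ z : (Fin np → ℝ) × (Fin s → Fin nx → ℝ),
      Tlin z = (z.1, z.2 - B z.1 - M z.2) := by intro z; simp [hTlin]
  set Te : ((Fin np → ℝ) × (Fin s → Fin nx → ℝ)) ≃ₗ[ℝ]
      ((Fin np → ℝ) × (Fin s → Fin nx → ℝ)) :=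
    { Tlin with
      invFun := fun z => (z.1, e1.symm (z.2 + B z.1))
      left_inv := by
        intro z
        have h1 : (z.2 - B z.1 - M z.2) + B z.1 = e1 z.2 := by
          rw [he1app]; abel
        show ((Tlin z).1, e1.symm ((Tlin z).2 + B (Tlin z).1)) = z
        rw [hTlinapp]
        simp only
        rw [h1, e1.symm_apply_apply]
      right_inv := by
        intro z
        show Tlin (z.1, e1.symm (z.2 + B z.1)) = z
        rw [hTlinapp]
        simp only
        have h2 : e1.symm (z.2 + B z.1) - B z.1 - M (e1.symm (z.2 + B z.1))
            = e1 (e1.symm (z.2 + B z.1)) - B z.1 := by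
          rw [he1app]; abel
        rw [h2, e1.apply_symm_apply]
        simp
        } with hTe
  have hTeapp : ∀ z : (Fin np → ℝ) × (Fin s → Fin nx → ℝ),
      Te z = (z.1, z.2 - B z.1 - M z.2) := fun z => hTlinapp z
  set TeL : ((Fin np → ℝ) × (Fin s → Fin nx → ℝ)) ≃L[ℝ]
      ((Fin np → ℝ) × (Fin s → Fin nx → ℝ)) := Te.toContinuousLinearEquiv with hTeL
  -- the implicit map Φ
  set Φ : ((Fin np → ℝ) × (Fin s → Fin nx → ℝ)) → ((Fin np → ℝ) × (Fin s → Fin nx → ℝ)) :=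
    fun z => (z.1, fun i => z.2 i - f (xb z.1 + h • ∑ j, a i j • z.2 j) z.1 (τ i)) with hΦdef
  set z₀ : (Fin np → ℝ) × (Fin s → Fin nx → ℝ) := (p₀, K p₀) with hz₀
  -- strict differentiability of Φ at z₀ with invertible derivative TeL
  have hst_fst : HasStrictFDerivAt (fun z : (Fin np → ℝ) × (Fin s → Fin nx → ℝ) => z.1)
      (ContinuousLinearMap.fst ℝ _ _) z₀ := hasStrictFDerivAt_fst
  have hproj : ∀ j : Fin s, HasStrictFDerivAt
      (fun z : (Fin np → ℝ) × (Fin s → Fin nx → ℝ) => z.2 j)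
      ((ContinuousLinearMap.proj j).comp (ContinuousLinearMap.snd ℝ _ _)) z₀ :=
    fun j => ((ContinuousLinearMap.proj j).comp
      (ContinuousLinearMap.snd ℝ (Fin np → ℝ) (Fin s → Fin nx → ℝ))).hasStrictFDerivAt
  have hinner : ∀ i : Fin s, HasStrictFDerivAt
      (fun z : (Fin np → ℝ) × (Fin s → Fin nx → ℝ) => xb z.1 + h • ∑ j, a i j • z.2 j)
      (Dx.comp (ContinuousLinearMap.fst ℝ _ _) + h • ∑ j, a i j •
        ((ContinuousLinearMap.proj j).comp (ContinuousLinearMap.snd ℝ _ _))) z₀ := by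
    intro i
    exact (hDx.comp z₀ hst_fst).add
      ((HasStrictFDerivAt.fun_sum (fun j _ => (hproj j).const_smul (a i j))).const_smul h)
  have hcompi : ∀ i : Fin s, HasStrictFDerivAt
      (fun z : (Fin np → ℝ) × (Fin s → Fin nx → ℝ) =>
        f (xb z.1 + h • ∑ j, a i j • z.2 j) z.1 (τ i))
      (((Ai i).comp (ContinuousLinearMap.fst ℝ (Fin nx → ℝ) (Fin np → ℝ)) +
        (Pi' i).comp (ContinuousLinearMap.snd ℝ (Fin nx → ℝ) (Fin np → ℝ))).comp
          ((Dx.comp (ContinuousLinearMap.fst ℝ _ _) + h • ∑ j, a i j •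
            ((ContinuousLinearMap.proj j).comp (ContinuousLinearMap.snd ℝ _ _))).prod
            (ContinuousLinearMap.fst ℝ _ _))) z₀ := by
    intro i
    have hji := rk_joint nx np f hf dxf dpf hdxf hdpf (Y i) p₀ (τ i)
    exact hji.comp z₀ ((hinner i).prodMk hst_fst)
  have hΦ' : HasStrictFDerivAt Φ
      ((ContinuousLinearMap.fst ℝ _ _).prod (ContinuousLinearMap.pi (fun i =>
        ((ContinuousLinearMap.proj i).comp (ContinuousLinearMap.snd ℝ _ _)) -
        (((Ai i).comp (ContinuousLinearMap.fst ℝ (Fin nx → ℝ) (Fin np → ℝ)) +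
          (Pi' i).comp (ContinuousLinearMap.snd ℝ (Fin nx → ℝ) (Fin np → ℝ))).comp
            ((Dx.comp (ContinuousLinearMap.fst ℝ _ _) + h • ∑ j, a i j •
              ((ContinuousLinearMap.proj j).comp (ContinuousLinearMap.snd ℝ _ _))).prod
              (ContinuousLinearMap.fst ℝ _ _)))))) z₀ := by
    refine hst_fst.prodMk ?_
    apply hasStrictFDerivAt_pi''
    intro i
    rw [ContinuousLinearMap.proj_pi]
    exact (hproj i).sub (hcompi i)
  have hcoe : ((TeL : ((Fin np → ℝ) × (Fin s → Fin nx → ℝ)) ≃L[ℝ] _) :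
      ((Fin np → ℝ) × (Fin s → Fin nx → ℝ)) →L[ℝ] ((Fin np → ℝ) × (Fin s → Fin nx → ℝ)))
      = ((ContinuousLinearMap.fst ℝ _ _).prod (ContinuousLinearMap.pi (fun i =>
        ((ContinuousLinearMap.proj i).comp (ContinuousLinearMap.snd ℝ _ _)) -
        (((Ai i).comp (ContinuousLinearMap.fst ℝ (Fin nx → ℝ) (Fin np → ℝ)) +
          (Pi' i).comp (ContinuousLinearMap.snd ℝ (Fin nx → ℝ) (Fin np → ℝ))).comp
            ((Dx.comp (ContinuousLinearMap.fst ℝ _ _) + h • ∑ j, a i j •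
              ((ContinuousLinearMap.proj j).comp (ContinuousLinearMap.snd ℝ _ _))).prod
              (ContinuousLinearMap.fst ℝ _ _)))))) := by
    apply ContinuousLinearMap.ext
    intro z
    have hTz : (TeL : _ →L[ℝ] _) z = (z.1, z.2 - B z.1 - M z.2) := by
      show Te z = _
      exact hTeapp z
    rw [hTz]
    refine Prod.ext (by simp) ?_
    funext i
    simp only [ContinuousLinearMap.prod_apply, ContinuousLinearMap.pi_apply,
      ContinuousLinearMap.sub_apply, ContinuousLinearMap.comp_apply,
      ContinuousLinearMap.add_apply, ContinuousLinearMap.coe_fst', ContinuousLinearMap.coe_snd',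
      ContinuousLinearMap.proj_apply, ContinuousLinearMap.smul_apply,
      ContinuousLinearMap.sum_apply]
    have hBz : B z.1 i = Ai i (Dx z.1) + Pi' i z.1 := by simp [hB]
    simp only [Pi.sub_apply]
    rw [hMapp z.2 i, hBz]
    have hsplit : (Ai i) (Dx z.1 + h • ∑ x, a i x • z.2 x)
        = (Ai i) (Dx z.1) + h • ∑ x, a i x • (Ai i) (z.2 x) := by
      rw [map_add, _root_.map_smul, map_sum]; simp only [_root_.map_smul]
    rw [hsplit]
    abel
  have hΦst : HasStrictFDerivAt Φ
      ((TeL : ((Fin np → ℝ) × (Fin s → Fin nx → ℝ)) ≃L[ℝ] _) :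
        ((Fin np → ℝ) × (Fin s → Fin nx → ℝ)) →L[ℝ] _) z₀ := by
    rw [hcoe]; exact hΦ'
  have hΦz₀ : Φ z₀ = (p₀, 0) := by
    have h0 : (fun i => K p₀ i - f (xb p₀ + h • ∑ j, a i j • K p₀ j) p₀ (τ i))
        = (0 : Fin s → Fin nx → ℝ) := by
      funext i; rw [← hK p₀ i]; simp
    show (p₀, fun i => K p₀ i - f (xb p₀ + h • ∑ j, a i j • K p₀ j) p₀ (τ i)) = (p₀, 0)
    rw [h0]
  set g := hΦst.localInverse Φ TeL z₀ with hgdef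
  have hright : ∀ᶠ zz in nhds (p₀, (0 : Fin s → Fin nx → ℝ)), Φ (g zz) = zz := by
    have := hΦst.eventually_right_inverse
    rwa [hΦz₀] at this
  have hcontq : Filter.Tendsto (fun q : Fin np → ℝ => (q, (0 : Fin s → Fin nx → ℝ)))
      (nhds p₀) (nhds (p₀, (0 : Fin s → Fin nx → ℝ))) :=
    Filter.Tendsto.prodMk_nhds Filter.tendsto_id tendsto_const_nhds
  have hqev : ∀ᶠ q in nhds p₀, Φ (g (q, 0)) = (q, 0) := hcontq.eventually hright
  have hkev : (fun q' : Fin np → ℝ => (g (q', 0)).2) =ᶠ[nhds p₀] K := by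
    filter_upwards [hqev] with q hq1
    refine Eq.symm ?_
    have hz1 : (g (q, 0)).1 = q := congrArg Prod.fst hq1
    have hz2 : ∀ i, (g (q, 0)).2 i
        = f (xb q + h • ∑ j, a i j • (g (q, 0)).2 j) q (τ i) := by
      intro i
      have h2 : (Φ (g (q, 0))).2 = (0 : Fin s → Fin nx → ℝ) := congrArg Prod.snd hq1
      simp only [hΦdef] at h2
      have h3 := congrFun h2 i
      rw [hz1] at h3
      simp only [Pi.zero_apply] at h3
      exact sub_eq_zero.mp h3
    exact huniq q (K q) ((g (q, 0)).2) (hK q) hz2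
  have hgst : HasStrictFDerivAt g
      ((TeL.symm : ((Fin np → ℝ) × (Fin s → Fin nx → ℝ)) ≃L[ℝ] _) :
        ((Fin np → ℝ) × (Fin s → Fin nx → ℝ)) →L[ℝ] _) (p₀, 0) := by
    have := hΦst.to_localInverse
    rwa [hΦz₀] at this
  have hcomp1 : HasStrictFDerivAt (fun q : Fin np → ℝ => g (q, 0))
      (((TeL.symm : ((Fin np → ℝ) × (Fin s → Fin nx → ℝ)) ≃L[ℝ] _) :
        ((Fin np → ℝ) × (Fin s → Fin nx → ℝ)) →L[ℝ] _).comp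
        ((ContinuousLinearMap.id ℝ (Fin np → ℝ)).prod 0)) p₀ :=
    hgst.comp p₀ ((hasStrictFDerivAt_id p₀).prodMk (hasStrictFDerivAt_const 0 p₀))
  have hcomp2 : HasStrictFDerivAt (fun q : Fin np → ℝ => (g (q, 0)).2)
      ((ContinuousLinearMap.snd ℝ (Fin np → ℝ) (Fin s → Fin nx → ℝ)).comp
        (((TeL.symm : ((Fin np → ℝ) × (Fin s → Fin nx → ℝ)) ≃L[ℝ] _) :
          ((Fin np → ℝ) × (Fin s → Fin nx → ℝ)) →L[ℝ] _).comp
          ((ContinuousLinearMap.id ℝ (Fin np → ℝ)).prod 0))) p₀ :=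
    hasStrictFDerivAt_snd.comp p₀ hcomp1
  exact ⟨_, hcomp2.congr_of_eventuallyEq hkev⟩



lemma rk_dot_sum (n s : ℕ) (u : Fin n → ℝ) (w : Fin s → Fin n → ℝ) :
    u ⬝ᵥ (∑ i, w i) = ∑ i, u ⬝ᵥ w i := by
  simp [dotProduct, Finset.mul_sum]; rw [Finset.sum_comm]

lemma rk_sum_dot (n s : ℕ) (u : Fin n → ℝ) (w : Fin s → Fin n → ℝ) :
    (∑ i, w i) ⬝ᵥ u = ∑ i, w i ⬝ᵥ u := by
  simp [dotProduct, Finset.sum_mul]; rw [Finset.sum_comm]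

lemma rk_dot_transpose (m n : ℕ) (M : Matrix (Fin m) (Fin n) ℝ) (u : Fin m → ℝ)
    (w : Fin n → ℝ) : Mᵀ.mulVec u ⬝ᵥ w = u ⬝ᵥ M.mulVec w := by
  simp only [dotProduct, mulVec, transpose_apply, Finset.sum_mul, Finset.mul_sum]
  rw [Finset.sum_comm]
  exact Finset.sum_congr rfl fun i _ => Finset.sum_congr rfl fun l _ => by ring

/-- **Adjoint sensitivity: discretize-then-differentiate.**
For the Runge–Kutta discretization `x_0, …, x_N` (with stages `X_{n,i}`, `k_{n,i}`) of
`ẋ = f(x, p, t)`, `x(0) = x₀`, with step sizes `h_n = t_{n+1} − t_n` satisfying the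
admissibility bound, and for `Φ(p) = C(x_N(p))`, the gradient is
`∂Φ(p) = Σ_{n<N} h_n Σ_i b̄_i d_p f(X_{n,i}, p, t_n + c̄_i h_n)ᵀ Λ_{n,i}`, where the discrete
adjoint variables `λ_n, ℓ_{n,i}, Λ_{n,i}` are generated (backwards from `λ_N = ∂C(x_N)`) by
the Runge–Kutta scheme with coefficients `ā_{ij} = b_j − a_{ji} b_j / b_i`, `b̄_i = b_i`,
`c̄_i = c_i` applied to the continuous adjoint equation `λ̇ = − d_x f(x, p, t)ᵀ λ`. -/
theorem discrete_adjoint_sensitivity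
    (nx np s N : ℕ) (hs : 0 < s)
    (f : (Fin nx → ℝ) → (Fin np → ℝ) → ℝ → (Fin nx → ℝ))
    (L : ℝ) (hL : 0 < L)
    (hcont : ∀ q : Fin np → ℝ, Continuous fun u : (Fin nx → ℝ) × ℝ => f u.1 q u.2)
    (hLip : ∀ (q : Fin np → ℝ) (t : ℝ), LipschitzWith (Real.toNNReal L) (fun y => f y q t))
    -- f is continuously differentiable in x and p, with Jacobians d_x f and d_p f
    (hf : ContDiff ℝ 1 (fun u : (Fin nx → ℝ) × (Fin np → ℝ) × ℝ => f u.1 u.2.1 u.2.2))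
    (dxf : (Fin nx → ℝ) → (Fin np → ℝ) → ℝ → Matrix (Fin nx) (Fin nx) ℝ)
    (dpf : (Fin nx → ℝ) → (Fin np → ℝ) → ℝ → Matrix (Fin nx) (Fin np) ℝ)
    (hdxf : ∀ y q t, HasFDerivAt (fun y' => f y' q t)
      (LinearMap.toContinuousLinearMap (dxf y q t).mulVecLin) y)
    (hdpf : ∀ y q t, HasFDerivAt (fun q' => f y q' t)
      (LinearMap.toContinuousLinearMap (dpf y q t).mulVecLin) q)
    -- Runge–Kutta coefficients with nonzero weights
    (a : Fin s → Fin s → ℝ) (b c : Fin s → ℝ) (hb : ∀ i, b i ≠ 0)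
    -- step sizes h_n = t_{n+1} − t_n satisfying the admissibility condition
    (t : ℕ → ℝ)
    (hpos : ∀ n < N, 0 < t (n+1) - t n)
    (hstep : ∀ n < N, t (n+1) - t n < 1 / (L * Finset.univ.sup'
      (Finset.univ_nonempty_iff.mpr (Fin.pos_iff_nonempty.mp hs))
      (fun i => ∑ j, |a i j|)))
    -- the Runge–Kutta iterates, as functions of the parameter
    (x0 : Fin nx → ℝ) (p₀ : Fin np → ℝ)
    (x : (Fin np → ℝ) → ℕ → Fin nx → ℝ)
    (k : (Fin np → ℝ) → ℕ → Fin s → Fin nx → ℝ)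
    (X : (Fin np → ℝ) → ℕ → Fin s → Fin nx → ℝ)
    (hx0 : ∀ q, x q 0 = x0)
    (hx : ∀ q n, x q (n+1) = x q n + (t (n+1) - t n) • ∑ i, b i • k q n i)
    (hk : ∀ q n i, k q n i = f (X q n i) q (t n + c i * (t (n+1) - t n)))
    (hX : ∀ q n i, X q n i = x q n + (t (n+1) - t n) • ∑ j, a i j • k q n j)
    -- a differentiable objective C
    (C : (Fin nx → ℝ) → ℝ) (hC : Differentiable ℝ C)
    -- the companion coefficients ā_{ij} = b_j − a_{ji} b_j / b_i (with b̄ = b, c̄ = c)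
    (abar : Fin s → Fin s → ℝ)
    (habar : ∀ i j, abar i j = b j - a j i * b j / b i)
    -- the discrete adjoint variables at the parameter p₀
    (lam : ℕ → Fin nx → ℝ)
    (ell Lam : ℕ → Fin s → Fin nx → ℝ)
    (hlamN : ∀ j, lam N j = fderiv ℝ C (x p₀ N) (Pi.single j 1))
    (hlam : ∀ n < N, lam (n+1) = lam n + (t (n+1) - t n) • ∑ i, b i • ell n i)
    (hell : ∀ n < N, ∀ i, ell n i
      = -(Matrix.mulVec (dxf (X p₀ n i) p₀ (t n + c i * (t (n+1) - t n)))ᵀ (Lam n i)))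
    (hLam : ∀ n < N, ∀ i, Lam n i = lam n + (t (n+1) - t n) • ∑ j, abar i j • ell n j) :
    -- gradient formula for Φ(p) = C(x_N(p))
    DifferentiableAt ℝ (fun q => C (x q N)) p₀ ∧
    ∀ j, fderiv ℝ (fun q => C (x q N)) p₀ (Pi.single j 1)
      = ∑ n ∈ Finset.range N, (t (n+1) - t n) *
          ∑ i, b i *
            Matrix.mulVec (dpf (X p₀ n i) p₀ (t n + c i * (t (n+1) - t n)))ᵀ (Lam n i) j := by
  classical
  rcases Nat.eq_zero_or_pos N with hN0 | hNpos
  · subst hN0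
    have hxc : (fun q => C (x q 0)) = fun _ => C x0 := funext fun q => by rw [hx0]
    constructor
    · rw [hxc]; exact differentiableAt_const _
    · intro j; rw [hxc]; simp
  · -- the admissibility constant
    set A : ℝ := Finset.univ.sup'
      (Finset.univ_nonempty_iff.mpr (Fin.pos_iff_nonempty.mp hs))
      (fun i => ∑ j, |a i j|) with hAdef
    have hAub : ∀ i, ∑ j, |a i j| ≤ A := fun i =>
      Finset.le_sup' (fun i => ∑ j, |a i j|) (Finset.mem_univ i)
    have hA0 : 0 ≤ A := le_trans (by positivity) (hAub ⟨0, hs⟩)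
    have hApos : 0 < A := by
      rcases eq_or_lt_of_le hA0 with hA0' | hA0'
      · exfalso
        have h1 := hstep 0 hNpos
        rw [← hA0'] at h1
        simp at h1
        linarith [hpos 0 hNpos]
      · exact hA0'
    have hθ : ∀ n, n < N → L * A * (t (n+1) - t n) < 1 := by
      intro n hn
      have h1 := hstep n hn
      have h2 : 0 < L * A := by positivity
      have h3 := (lt_div_iff₀ h2).mp h1
      nlinarith
    -- strict differentiability of the iterates, by induction via the IFT
    have hxstrict : ∀ n, n ≤ N →
        ∃ D : (Fin np → ℝ) →L[ℝ] (Fin nx → ℝ),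
          HasStrictFDerivAt (fun q => x q n) D p₀ := by
      intro n
      induction n with
      | zero =>
        intro _
        refine ⟨0, ?_⟩
        have hc : (fun q : Fin np → ℝ => x q 0) = fun _ => x0 := funext hx0
        rw [hc]
        exact hasStrictFDerivAt_const x0 p₀
      | succ n ih =>
        intro hn1
        have hn : n < N := Nat.lt_of_succ_le hn1
        obtain ⟨Dx, hDx⟩ := ih (Nat.le_of_succ_le hn1)
        obtain ⟨Dk, hDk⟩ := rk_stage_diff nx np s f L hL hLip hf dxf dpf hdxf hdpf a
          (fun i => t n + c i * (t (n+1) - t n)) (t (n+1) - t n) (hpos n hn) A hA0 hAub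
          (hθ n hn) p₀ (fun q => x q n) (fun q => k q n)
          (fun q i => by show k q n i = _; rw [hk q n i, hX q n i]) Dx hDx
        have hki : ∀ i, HasStrictFDerivAt (fun q => k q n i)
            ((ContinuousLinearMap.proj i).comp Dk) p₀ := fun i =>
          (ContinuousLinearMap.proj i :
            (Fin s → Fin nx → ℝ) →L[ℝ] (Fin nx → ℝ)).hasStrictFDerivAt.comp p₀ hDk
        refine ⟨_, HasStrictFDerivAt.congr_of_eventuallyEq
          (hDx.add ((HasStrictFDerivAt.fun_sum
            (fun (i : Fin s) _ => (hki i).const_smul (b i))).const_smul (t (n+1) - t n)))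
          (Filter.Eventually.of_forall fun q => (hx q n).symm)⟩
    -- stage differentiability
    have hkstrict : ∀ n, n < N →
        ∃ D : (Fin np → ℝ) →L[ℝ] (Fin s → Fin nx → ℝ),
          HasStrictFDerivAt (fun q => k q n) D p₀ := by
      intro n hn
      obtain ⟨Dx, hDx⟩ := hxstrict n hn.le
      exact rk_stage_diff nx np s f L hL hLip hf dxf dpf hdxf hdpf a
        (fun i => t n + c i * (t (n+1) - t n)) (t (n+1) - t n) (hpos n hn) A hA0 hAub
        (hθ n hn) p₀ (fun q => x q n) (fun q => k q n)
        (fun q i => by show k q n i = _; rw [hk q n i, hX q n i]) Dx hDx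
    have hxdiff : ∀ n, n ≤ N → DifferentiableAt ℝ (fun q => x q n) p₀ := fun n hn =>
      ((hxstrict n hn).choose_spec).differentiableAt
    have hkidiff : ∀ n, n < N → ∀ i, DifferentiableAt ℝ (fun q => k q n i) p₀ := by
      intro n hn i
      obtain ⟨Dk, hDk⟩ := hkstrict n hn
      exact ((ContinuousLinearMap.proj i :
        (Fin s → Fin nx → ℝ) →L[ℝ] (Fin nx → ℝ)).hasStrictFDerivAt.comp p₀
          hDk).differentiableAt
    have hXeq : ∀ n i, (fun q => X q n i)
        = fun q => x q n + (t (n+1) - t n) • ∑ l, a i l • k q n l :=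
      fun n i => funext fun q => hX q n i
    have hXidiff : ∀ n, n < N → ∀ i, DifferentiableAt ℝ (fun q => X q n i) p₀ := by
      intro n hn i
      rw [hXeq n i]
      exact (hxdiff n hn.le).add
        ((DifferentiableAt.fun_sum (fun l _ => (hkidiff n hn l).fun_const_smul (a i l))).fun_const_smul _)
    refine ⟨DifferentiableAt.comp p₀ (hC (x p₀ N)) (hxdiff N le_rfl), ?_⟩
    intro j
    set v : Fin np → ℝ := Pi.single j 1 with hvdef
    set vx : ℕ → Fin nx → ℝ := fun n => fderiv ℝ (fun q => x q n) p₀ v with hvx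
    set vk : ℕ → Fin s → Fin nx → ℝ := fun n i => fderiv ℝ (fun q => k q n i) p₀ v with hvk
    set vX : ℕ → Fin s → Fin nx → ℝ := fun n i => fderiv ℝ (fun q => X q n i) p₀ v with hvX
    have R0 : vx 0 = 0 := by
      have hc : (fun q : Fin np → ℝ => x q 0) = fun _ => x0 := funext hx0
      show fderiv ℝ (fun q => x q 0) p₀ v = 0
      rw [hc, fderiv_fun_const]
      simp
    have R1 : ∀ n, n < N → vx (n+1) = vx n + (t (n+1) - t n) • ∑ i, b i • vk n i := by
      intro n hn
      have h1 : HasFDerivAt (fun q => x q (n+1))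
          ((fderiv ℝ (fun q => x q n) p₀) + (t (n+1) - t n) • ∑ i, b i •
            (fderiv ℝ (fun q => k q n i) p₀)) p₀ := by
        refine HasFDerivAt.congr_of_eventuallyEq ?_
          (Filter.Eventually.of_forall fun q => hx q n)
        exact (hxdiff n hn.le).hasFDerivAt.add ((HasFDerivAt.fun_sum
          (fun (i : Fin s) _ => ((hkidiff n hn i).hasFDerivAt.fun_const_smul (b i)))).fun_const_smul _)
      have h2 := h1.fderiv
      show fderiv ℝ (fun q => x q (n+1)) p₀ v = _
      rw [h2]
      simp [ContinuousLinearMap.add_apply, ContinuousLinearMap.smul_apply,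
        ContinuousLinearMap.sum_apply]
      rfl
    have R2 : ∀ n, n < N → ∀ i, vX n i = vx n + (t (n+1) - t n) • ∑ l, a i l • vk n l := by
      intro n hn i
      have h1 : HasFDerivAt (fun q => X q n i)
          ((fderiv ℝ (fun q => x q n) p₀) + (t (n+1) - t n) • ∑ l, a i l •
            (fderiv ℝ (fun q => k q n l) p₀)) p₀ := by
        refine HasFDerivAt.congr_of_eventuallyEq ?_
          (Filter.Eventually.of_forall fun q => hX q n i)
        exact (hxdiff n hn.le).hasFDerivAt.add ((HasFDerivAt.fun_sum
          (fun (l : Fin s) _ => ((hkidiff n hn l).hasFDerivAt.fun_const_smul (a i l)))).fun_const_smul _)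
      have h2 := h1.fderiv
      show fderiv ℝ (fun q => X q n i) p₀ v = _
      rw [h2]
      simp [ContinuousLinearMap.add_apply, ContinuousLinearMap.smul_apply,
        ContinuousLinearMap.sum_apply]
      rfl
    have R3 : ∀ n, n < N → ∀ i, vk n i
        = (dxf (X p₀ n i) p₀ (t n + c i * (t (n+1) - t n))).mulVec (vX n i)
          + (dpf (X p₀ n i) p₀ (t n + c i * (t (n+1) - t n))).mulVec v := by
      intro n hn i
      have hpair : HasFDerivAt (fun q => (X q n i, q))
          ((fderiv ℝ (fun q => X q n i) p₀).prod (ContinuousLinearMap.id ℝ (Fin np → ℝ))) p₀ :=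
        (hXidiff n hn i).hasFDerivAt.prodMk (hasFDerivAt_id p₀)
      have hjoint := (rk_joint nx np f hf dxf dpf hdxf hdpf (X p₀ n i) p₀
        (t n + c i * (t (n+1) - t n))).hasFDerivAt
      have hkfun : HasFDerivAt (fun q => k q n i)
          (((LinearMap.toContinuousLinearMap
              (dxf (X p₀ n i) p₀ (t n + c i * (t (n+1) - t n))).mulVecLin).comp
            (ContinuousLinearMap.fst ℝ (Fin nx → ℝ) (Fin np → ℝ)) +
            (LinearMap.toContinuousLinearMap
              (dpf (X p₀ n i) p₀ (t n + c i * (t (n+1) - t n))).mulVecLin).comp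
            (ContinuousLinearMap.snd ℝ (Fin nx → ℝ) (Fin np → ℝ))).comp
            ((fderiv ℝ (fun q => X q n i) p₀).prod (ContinuousLinearMap.id ℝ (Fin np → ℝ))))
          p₀ := by
        refine HasFDerivAt.congr_of_eventuallyEq ?_
          (Filter.Eventually.of_forall fun q => hk q n i)
        exact HasFDerivAt.comp (f := fun q => (X q n i, q)) p₀ hjoint hpair
      have h2 := hkfun.fderiv
      show fderiv ℝ (fun q => k q n i) p₀ v = _
      rw [h2]
      simp [ContinuousLinearMap.comp_apply, ContinuousLinearMap.prod_apply,
        ContinuousLinearMap.add_apply, Matrix.mulVecLin_apply]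
      rfl
    have hba : ∀ i1 i2, b i1 * abar i1 i2 = b i1 * b i2 - a i2 i1 * b i2 := by
      intro i1 i2
      rw [habar i1 i2]
      field_simp [hb i1]
    have keystep : ∀ n, n < N → lam (n+1) ⬝ᵥ vx (n+1)
        = lam n ⬝ᵥ vx n + (t (n+1) - t n) * ∑ i, b i *
            (Lam n i ⬝ᵥ (dpf (X p₀ n i) p₀ (t n + c i * (t (n+1) - t n))).mulVec v) := by
      intro n hn
      have hγ : ∀ i, Lam n i ⬝ᵥ vk n i
          = -(ell n i ⬝ᵥ vx n)
            - (t (n+1) - t n) * ∑ l, a i l * (ell n i ⬝ᵥ vk n l)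
            + Lam n i ⬝ᵥ (dpf (X p₀ n i) p₀ (t n + c i * (t (n+1) - t n))).mulVec v := by
        intro i
        have h1 : Lam n i ⬝ᵥ (dxf (X p₀ n i) p₀ (t n + c i * (t (n+1) - t n))).mulVec (vX n i)
            = -(ell n i ⬝ᵥ vX n i) := by
          rw [hell n hn i, neg_dotProduct, rk_dot_transpose, neg_neg]
        have h2 : ell n i ⬝ᵥ vX n i = ell n i ⬝ᵥ vx n
            + (t (n+1) - t n) * ∑ l, a i l * (ell n i ⬝ᵥ vk n l) := by
          rw [R2 n hn i, dotProduct_add, dotProduct_smul, rk_dot_sum]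
          simp only [dotProduct_smul, smul_eq_mul]
        conv_lhs => rw [R3 n hn i]
        rw [dotProduct_add, h1, h2]
        ring
      have hlk : ∀ i, lam n ⬝ᵥ vk n i = Lam n i ⬝ᵥ vk n i
          - (t (n+1) - t n) * ∑ l, abar i l * (ell n l ⬝ᵥ vk n i) := by
        intro i
        have h3 := congrArg (fun w => w ⬝ᵥ vk n i) (hLam n hn i)
        simp only [add_dotProduct, smul_dotProduct, rk_sum_dot, smul_eq_mul] at h3
        rw [h3]
        ring
      have hexp : lam (n+1) ⬝ᵥ vx (n+1)
          = lam n ⬝ᵥ vx n + (t (n+1) - t n) * ∑ i, b i * (ell n i ⬝ᵥ vx n)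
            + (t (n+1) - t n) * ∑ i, b i * (lam n ⬝ᵥ vk n i)
            + (t (n+1) - t n) * (t (n+1) - t n)
              * ∑ i, ∑ l, b i * b l * (ell n i ⬝ᵥ vk n l) := by
        have e1 : (∑ i, b i • ell n i) ⬝ᵥ vx n = ∑ i, b i * (ell n i ⬝ᵥ vx n) := by
          rw [rk_sum_dot]
          simp only [smul_dotProduct, smul_eq_mul]
        have e2 : lam n ⬝ᵥ (∑ i, b i • vk n i) = ∑ i, b i * (lam n ⬝ᵥ vk n i) := by
          rw [rk_dot_sum]
          simp only [dotProduct_smul, smul_eq_mul]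
        have e3 : (∑ i, b i • ell n i) ⬝ᵥ (∑ l, b l • vk n l)
            = ∑ i, ∑ l, b i * b l * (ell n i ⬝ᵥ vk n l) := by
          rw [rk_sum_dot]
          simp only [smul_dotProduct, rk_dot_sum, dotProduct_smul, smul_eq_mul,
            Finset.mul_sum]
          exact Finset.sum_congr rfl fun i _ => Finset.sum_congr rfl fun l _ => by ring
        rw [hlam n hn, R1 n hn, add_dotProduct, dotProduct_add, dotProduct_add,
          smul_dotProduct, dotProduct_smul, dotProduct_smul, smul_dotProduct, e1, e2, e3]
        simp only [smul_eq_mul]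
        ring
      rw [hexp]
      have halg := rk_step_alg s b a abar hba (t (n+1) - t n) (lam n ⬝ᵥ vx n)
        (fun i => ell n i ⬝ᵥ vx n) (fun i => Lam n i ⬝ᵥ vk n i)
        (fun i => Lam n i ⬝ᵥ (dpf (X p₀ n i) p₀ (t n + c i * (t (n+1) - t n))).mulVec v)
        (fun i => lam n ⬝ᵥ vk n i) (fun i l => ell n i ⬝ᵥ vk n l) hγ hlk
      linarith [halg]
    have htel : ∀ n, n ≤ N → lam n ⬝ᵥ vx n
        = ∑ m ∈ Finset.range n, (t (m+1) - t m) * ∑ i, b i *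
            (Lam m i ⬝ᵥ (dpf (X p₀ m i) p₀ (t m + c i * (t (m+1) - t m))).mulVec v) := by
      intro n
      induction n with
      | zero => intro _; rw [R0]; simp
      | succ n ih =>
        intro hn1
        rw [Finset.sum_range_succ, ← ih (Nat.le_of_succ_le hn1),
          keystep n (Nat.lt_of_succ_le hn1)]
    have hcv : fderiv ℝ (fun q => C (x q N)) p₀
        = (fderiv ℝ C (x p₀ N)).comp (fderiv ℝ (fun q => x q N) p₀) :=
      fderiv_comp p₀ (hC (x p₀ N)) (hxdiff N le_rfl)
    rw [hcv]
    rw [ContinuousLinearMap.comp_apply]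
    have hdec : fderiv ℝ C (x p₀ N) (vx N) = lam N ⬝ᵥ vx N := by
      have hv : vx N = ∑ m : Fin nx, vx N m • (Pi.single m 1 : Fin nx → ℝ) := by
        funext l
        simp [Finset.sum_apply, Pi.single_apply]
      conv_lhs => rw [hv]
      rw [map_sum]
      simp only [_root_.map_smul, smul_eq_mul]
      rw [dotProduct]
      exact Finset.sum_congr rfl fun m _ => by rw [hlamN m]; ring
    have hsingle : ∀ (w : Fin np → ℝ), w ⬝ᵥ (Pi.single j 1 : Fin np → ℝ) = w j := by
      intro w; simp [dotProduct, Pi.single_apply]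
    have hfinal : fderiv ℝ C (x p₀ N) (fderiv ℝ (fun q => x q N) p₀ v) = lam N ⬝ᵥ vx N := hdec
    rw [hfinal, htel N le_rfl]
    refine Finset.sum_congr rfl fun m hm => ?_
    congr 1
    refine Finset.sum_congr rfl fun i _ => ?_
    congr 1
    rw [← hsingle ((dpf (X p₀ m i) p₀ (t m + c i * (t (m+1) - t m)))ᵀ.mulVec (Lam m i)),
      rk_dot_transpose, hvdef]
end

section
/- For every i ∈ V and every W in the assignment manifold W, the similarity map S_i(W) := Exp_{W_i}( Σ_{k∈N_i} ω_{ik} Exp_{W_i}^{-1}(L_k(W_k)) ) can equivalently be expressed using the barycenter 1_{S_n} = (1/n)1_n as S_i(W) = exp_{1_{S_n}}( Σ_{k∈N_i} ω_{ik} ( exp_{1_{S_n}}^{-1}(W_k) − (1/ρ) D_k ) ). -/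
/-- The exponential map `Exp_p(v) = p e^{v/p} / ⟨p, e^{v/p}⟩` of the e-connection. -/
noncomputable def simplexExp {n : ℕ} (p v : Fin n → ℝ) : Fin n → ℝ :=
  fun j => p j * Real.exp (v j / p j) / ∑ k, p k * Real.exp (v k / p k)

/-- The replicator operator `R_p a = Diag(p) a − p ⟨p, a⟩`. -/
def replicator {n : ℕ} (p a : Fin n → ℝ) : Fin n → ℝ :=
  fun j => p j * a j - p j * ∑ k, p k * a k

/-- The inverse exponential map `Exp_p^{-1}(q) = R_p log(q / p)`. -/
noncomputable def simplexExpInv {n : ℕ} (p q : Fin n → ℝ) : Fin n → ℝ :=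
  replicator p fun j => Real.log (q j / p j)

/-- The lifting map `exp_p(z) = p e^z / ⟨p, e^z⟩`. -/
noncomputable def softExp {n : ℕ} (p z : Fin n → ℝ) : Fin n → ℝ :=
  fun j => p j * Real.exp (z j) / ∑ k, p k * Real.exp (z k)

/-- The orthogonal projection `Π_n v = v − (⟨1, v⟩ / n) 1` onto the tangent space `T_n`. -/
noncomputable def projT {n : ℕ} (v : Fin n → ℝ) : Fin n → ℝ :=
  fun j => v j - (∑ k, v k) / n

/-- The inverse lifting map `exp_p^{-1}(q) = Π_n log(q / p)`. -/
noncomputable def softExpInv {n : ℕ} (p q : Fin n → ℝ) : Fin n → ℝ :=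
  projT fun j => Real.log (q j / p j)

/-- The likelihood vector `L_k(W_k) = W_k e^{−D_k/ρ} / ⟨W_k, e^{−D_k/ρ}⟩`. -/
noncomputable def likelihoodVec {n : ℕ} (ρ : ℝ) (D W : Fin n → ℝ) : Fin n → ℝ :=
  fun j => W j * Real.exp (-D j / ρ) / ∑ k, W k * Real.exp (-D k / ρ)

/-- The barycenter `1_{S_n} = (1/n) 1_n` of the simplex. -/
noncomputable def bary (n : ℕ) : Fin n → ℝ := fun _ => 1 / n

/-!
Both sides are the normalized weighted geometric mean of the likelihoods. For a positive base
point `p`, `exp_p z` is the softmax of `log p + z`, and softmax ignores additive constants. Since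
`Exp_p(v) = exp_p(v / p)` and `R_p a / p = a - ⟨p, a⟩`, the left side is the softmax of
`Σ ω_k log L_k`, the weights summing to one cancelling `log W_i`. At the barycenter,
`exp_{1_{S_n}}` is softmax itself and `exp_{1_{S_n}}^{-1}(q) = Π_n log q`, so the right side is the
softmax of `Σ ω_k (log W_k - D_k / ρ)`, which differs from `Σ ω_k log L_k` by a constant.
-/

open Real Finset

noncomputable def softmax {n : ℕ} (z : Fin n → ℝ) : Fin n → ℝ :=
  fun j => exp (z j) / ∑ k, exp (z k)

lemma softmax_congr_add_const {n : ℕ} {z z' : Fin n → ℝ} (c : ℝ) (h : ∀ j, z j = z' j + c) :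
    softmax z = softmax z' := by
  funext j
  simp only [softmax, h, exp_add, ← sum_mul]
  exact mul_div_mul_right _ _ (exp_ne_zero c)

lemma softExp_eq_softmax {n : ℕ} {p : Fin n → ℝ} (hp : ∀ j, 0 < p j) (z : Fin n → ℝ) :
    softExp p z = softmax fun j => log (p j) + z j := by
  funext j
  simp only [softExp, softmax, exp_add, exp_log (hp _)]

lemma softExp_bary {n : ℕ} (z : Fin n → ℝ) : softExp (bary n) z = softmax z := by
  funext j
  simp only [softExp, softmax, bary, ← mul_sum]
  exact mul_div_mul_left _ _ (one_div_ne_zero (Nat.cast_ne_zero.2 j.pos.ne'))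

lemma simplexExp_eq_softExp {n : ℕ} (p v : Fin n → ℝ) :
    simplexExp p v = softExp p fun j => v j / p j :=
  rfl

lemma replicator_apply_div {n : ℕ} {p : Fin n → ℝ} (a : Fin n → ℝ) {j : Fin n} (hp : p j ≠ 0) :
    replicator p a j / p j = a j - ∑ k, p k * a k := by
  rw [replicator, ← mul_sub, mul_div_cancel_left₀ _ hp]

lemma simplexExp_sum_smul_simplexExpInv {n : ℕ} {ι : Type*} (s : Finset ι) (ω : ι → ℝ)
    (hω : ∑ k ∈ s, ω k = 1) {p : Fin n → ℝ} (hp : ∀ j, 0 < p j) (q : ι → Fin n → ℝ)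
    (hq : ∀ k ∈ s, ∀ j, 0 < q k j) :
    simplexExp p (∑ k ∈ s, ω k • simplexExpInv p (q k))
      = softmax fun j => ∑ k ∈ s, ω k * log (q k j) := by
  rw [simplexExp_eq_softExp, softExp_eq_softmax hp]
  refine softmax_congr_add_const (-∑ k ∈ s, ω k * ∑ l, p l * log (q k l / p l)) fun j => ?_
  have hterm : ∀ k ∈ s, (ω k • simplexExpInv p (q k)) j / p j
      = ω k * log (q k j) - ω k * log (p j) - ω k * ∑ l, p l * log (q k l / p l) := by
    intro k hk
    rw [Pi.smul_apply, smul_eq_mul, mul_div_assoc, simplexExpInv,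
      replicator_apply_div _ (hp j).ne', log_div (hq k hk j).ne' (hp j).ne']
    ring
  rw [Finset.sum_apply, sum_div, sum_congr rfl hterm, sum_sub_distrib, sum_sub_distrib,
    ← sum_mul, hω]
  ring

lemma projT_add_const {n : ℕ} (f : Fin n → ℝ) (c : ℝ) :
    projT (fun j => f j + c) = projT f := by
  funext j
  have hn : (n : ℝ) ≠ 0 := Nat.cast_ne_zero.2 j.pos.ne'
  simp only [projT, sum_add_distrib, sum_const, card_univ, Fintype.card_fin, nsmul_eq_mul]
  field_simp
  ring

lemma softExpInv_bary {n : ℕ} {q : Fin n → ℝ} (hq : ∀ j, q j ≠ 0) :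
    softExpInv (bary n) q = projT fun j => log (q j) := by
  have hlog : ∀ j, log (q j / bary n j) = log (q j) + log n := fun j => by
    rw [bary, div_div_eq_mul_div, div_one, log_mul (hq j) (Nat.cast_ne_zero.2 j.pos.ne')]
  simp only [softExpInv, hlog, projT_add_const]

lemma likelihoodVec_pos {n : ℕ} {ρ : ℝ} {D W : Fin n → ℝ} (hW : ∀ j, 0 < W j) (j : Fin n) :
    0 < likelihoodVec ρ D W j :=
  div_pos (mul_pos (hW j) (exp_pos _))
    (sum_pos (fun l _ => mul_pos (hW l) (exp_pos _)) ⟨j, mem_univ j⟩)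

lemma log_likelihoodVec {n : ℕ} {ρ : ℝ} {D W : Fin n → ℝ} (hW : ∀ j, 0 < W j) (j : Fin n) :
    log (likelihoodVec ρ D W j) = log (W j) - D j / ρ - log (∑ k, W k * exp (-D k / ρ)) := by
  have hZ : 0 < ∑ k, W k * exp (-D k / ρ) :=
    sum_pos (fun l _ => mul_pos (hW l) (exp_pos _)) ⟨j, mem_univ j⟩
  rw [likelihoodVec, log_div (mul_pos (hW j) (exp_pos _)).ne' hZ.ne',
    log_mul (hW j).ne' (exp_ne_zero _), log_exp]
  ring

theorem similarity_map_barycentric_form_general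
    (m n : ℕ)
    -- neighborhoods N_i containing i
    (nbh : Fin m → Finset (Fin m))
    -- positive weights summing to one over each neighborhood
    (ω : Fin m → Fin m → ℝ)
    (hωsum : ∀ i, ∑ k ∈ nbh i, ω i k = 1)
    -- W in the assignment manifold: rows are strictly positive probability vectors
    (W : Fin m → Fin n → ℝ)
    (hW : ∀ i j, 0 < W i j)
    -- distance matrix and scaling parameter
    (D : Fin m → Fin n → ℝ) (ρ : ℝ)
    (i : Fin m) :
    simplexExp (W i) (∑ k ∈ nbh i, ω i k • simplexExpInv (W i) (likelihoodVec ρ (D k) (W k)))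
      = softExp (bary n)
          (∑ k ∈ nbh i, ω i k • (softExpInv (bary n) (W k) - (1 / ρ) • D k)) := by
  have hinv : ∀ k, softExpInv (bary n) (W k) = projT fun j => log (W k j) :=
    fun k => softExpInv_bary fun j => (hW k j).ne'
  have hlog : ∀ k j, log (likelihoodVec ρ (D k) (W k) j)
      = log (W k j) - D k j / ρ - log (∑ l, W k l * exp (-D k l / ρ)) :=
    fun k => log_likelihoodVec (hW k)
  rw [simplexExp_sum_smul_simplexExpInv (nbh i) (ω i) (hωsum i) (hW i) _
      (fun k _ => likelihoodVec_pos (hW k)), softExp_bary]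
  refine softmax_congr_add_const
    (∑ k ∈ nbh i, ω i k * ((∑ l, log (W k l)) / n - log (∑ l, W k l * exp (-D k l / ρ))))
    fun j => ?_
  simp only [Finset.sum_apply, Pi.smul_apply, Pi.sub_apply, smul_eq_mul, hinv, projT, hlog,
    ← sum_add_distrib]
  exact sum_congr rfl fun k _ => by ring

/-- **Barycentric expression of the similarity map.** For every `i ∈ V` and every `W` in the
assignment manifold, `S_i(W) = Exp_{W_i}( Σ_{k ∈ N_i} ω_{ik} Exp_{W_i}^{-1}(L_k(W_k)) )`
can equivalently be expressed as
`S_i(W) = exp_{1_{S_n}}( Σ_{k ∈ N_i} ω_{ik}( exp_{1_{S_n}}^{-1}(W_k) − (1/ρ) D_k ) )`. -/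
theorem similarity_map_barycentric_form
    (m n : ℕ) (hn : 0 < n)
    -- neighborhoods N_i containing i
    (nbh : Fin m → Finset (Fin m)) (hself : ∀ i, i ∈ nbh i)
    -- positive weights summing to one over each neighborhood
    (ω : Fin m → Fin m → ℝ)
    (hω : ∀ i, ∀ k ∈ nbh i, 0 < ω i k)
    (hωsum : ∀ i, ∑ k ∈ nbh i, ω i k = 1)
    -- W in the assignment manifold: rows are strictly positive probability vectors
    (W : Fin m → Fin n → ℝ)
    (hW : ∀ i j, 0 < W i j) (hWsum : ∀ i, ∑ j, W i j = 1)
    -- distance matrix and scaling parameter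
    (D : Fin m → Fin n → ℝ) (ρ : ℝ) (hρ : 0 < ρ)
    (i : Fin m) :
    simplexExp (W i) (∑ k ∈ nbh i, ω i k • simplexExpInv (W i) (likelihoodVec ρ (D k) (W k)))
      = softExp (bary n)
          (∑ k ∈ nbh i, ω i k • (softExpInv (bary n) (W k) - (1 / ρ) • D k)) :=
  similarity_map_barycentric_form_general m n nbh ω hωsum W hW D ρ i
end

section
/- The differential of the similarity map S : W → W at W ∈ W, applied to a tangent matrix V ∈ T_W, is given componentwise by dS_i(W)[V] = Σ_{k∈N_i} ω_{ik} R_{S_i(W)}[ V_k / W_k ] for every i ∈ V, where the quotient V_k / W_k is taken componentwise; equivalently, in global matrix form, dS(W)[V] = R_{S(W)}[ A_Ω (V / W) ]. -/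
/-- The similarity map `S : W → W`,
`S_i(W) = exp_{1_{S_n}}( Σ_{k ∈ N_i} ω_{ik}( exp_{1_{S_n}}^{-1}(W_k) − (1/ρ) D_k ) )`. -/
noncomputable def simMap {m n : ℕ} (nbh : Fin m → Finset (Fin m)) (ω : Fin m → Fin m → ℝ)
    (D : Fin m → Fin n → ℝ) (ρ : ℝ) (W : Fin m → Fin n → ℝ) : Fin m → Fin n → ℝ :=
  fun i => softExp (fun _ => 1 / n)
    (∑ k ∈ nbh i, ω i k • (softExpInv (fun _ => 1 / n) (W k) - (1 / ρ) • D k))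


/-! The lifting map `exp_p` has differential `R_{exp_p(z)}` at `z`, and `exp_p^{-1}` has
differential `v ↦ Π_n (v / q)` at `q`, so the chain rule gives
`dS_i(W)[V] = R_{S_i(W)}[Σ_k ω_{ik} Π_n (V_k / W_k)]`. As `S_i(W)` is a probability vector,
`R_{S_i(W)}` annihilates constant vectors, so the projections `Π_n` drop out; linearity of `R`
then gives both the row-wise and the global form. -/

open Finset ContinuousLinearMap

section Replicator

variable {n : ℕ}

lemma replicator_add (q a b : Fin n → ℝ) :
    replicator q (a + b) = replicator q a + replicator q b := by
  funext j
  simp only [replicator, Pi.add_apply, mul_add, sum_add_distrib]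
  ring

lemma replicator_smul (q : Fin n → ℝ) (c : ℝ) (a : Fin n → ℝ) :
    replicator q (c • a) = c • replicator q a := by
  funext j
  simp only [replicator, Pi.smul_apply, smul_eq_mul, mul_left_comm _ c, ← mul_sum]
  ring

noncomputable def replicatorCLM (q : Fin n → ℝ) : (Fin n → ℝ) →L[ℝ] (Fin n → ℝ) :=
  LinearMap.toContinuousLinearMap
    { toFun := replicator q, map_add' := replicator_add q, map_smul' := replicator_smul q }

@[simp]
lemma replicatorCLM_apply (q a : Fin n → ℝ) : replicatorCLM q a = replicator q a := rfl

lemma replicator_sum_smul {ι : Type*} (q : Fin n → ℝ) (s : Finset ι) (c : ι → ℝ)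
    (a : ι → Fin n → ℝ) :
    replicator q (∑ k ∈ s, c k • a k) = ∑ k ∈ s, c k • replicator q (a k) := by
  simp only [← replicatorCLM_apply, map_sum, map_smul]

lemma replicator_sub_const {q : Fin n → ℝ} (hq : ∑ j, q j = 1) (a : Fin n → ℝ) (c : ℝ) :
    replicator q (fun j => a j - c) = replicator q a := by
  funext j
  simp only [replicator, mul_sub, sum_sub_distrib, ← sum_mul, hq]
  ring

lemma replicator_projT {q : Fin n → ℝ} (hq : ∑ j, q j = 1) (a : Fin n → ℝ) :
    replicator q (projT a) = replicator q a :=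
  replicator_sub_const hq a _

end Replicator

section SoftExp

variable {n : ℕ}

lemma sum_softExp (p : Fin n → ℝ) {z : Fin n → ℝ} (hz : ∑ k, p k * Real.exp (z k) ≠ 0) :
    ∑ j, softExp p z j = 1 := by
  simp only [softExp, ← sum_div, div_self hz]

lemma hasFDerivAt_softExp {p : Fin n → ℝ} (hp : ∀ j, 0 < p j) (z : Fin n → ℝ) :
    HasFDerivAt (softExp p) (replicatorCLM (softExp p z)) z := by
  rw [hasFDerivAt_pi']
  intro j
  set e : Fin n → (Fin n → ℝ) → ℝ := fun k z => p k * Real.exp (z k) with he_def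
  have he : ∀ k, HasFDerivAt (e k) (e k z • proj k) z := fun k => by
    simpa [he_def, smul_smul] using ((hasFDerivAt_apply k z).exp).const_mul (p k)
  have hS : 0 < ∑ k, e k z :=
    sum_pos (fun k _ => mul_pos (hp k) (Real.exp_pos _)) ⟨j, mem_univ j⟩
  have h := (he j).mul
    ((hasDerivAt_inv hS.ne').comp_hasFDerivAt z (HasFDerivAt.fun_sum fun k _ => he k))
  have hfun : (fun z => softExp p z j) = e j * (fun y => y⁻¹) ∘ fun y => ∑ k, e k y := by
    funext y
    simp [softExp, he_def, div_eq_mul_inv]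
  rw [hfun]
  refine h.congr_fderiv ?_
  ext ζ
  simp only [he_def, neg_smul, smul_neg, Function.comp_apply, add_apply, neg_apply, smul_apply,
    _root_.sum_apply, proj_apply, smul_eq_mul, comp_apply, replicatorCLM_apply, replicator, softExp,
    div_mul_eq_mul_div, ← sum_div]
  field_simp
  ring

end SoftExp

section SoftExpInv

variable {n : ℕ}

lemma projT_add (a b : Fin n → ℝ) : projT (a + b) = projT a + projT b := by
  funext j
  simp only [projT, Pi.add_apply, sum_add_distrib]
  ring

lemma projT_smul (c : ℝ) (a : Fin n → ℝ) : projT (c • a) = c • projT a := by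
  funext j
  simp only [projT, Pi.smul_apply, smul_eq_mul, ← mul_sum]
  ring

noncomputable def projTCLM : (Fin n → ℝ) →L[ℝ] (Fin n → ℝ) :=
  LinearMap.toContinuousLinearMap
    { toFun := projT, map_add' := projT_add, map_smul' := projT_smul }

@[simp]
lemma projTCLM_apply (a : Fin n → ℝ) : projTCLM a = projT a := rfl

noncomputable def divCLM (q : Fin n → ℝ) : (Fin n → ℝ) →L[ℝ] (Fin n → ℝ) :=
  pi fun j => (q j)⁻¹ • proj j

@[simp]
lemma divCLM_apply (q v : Fin n → ℝ) : divCLM q v = fun j => v j / q j := by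
  funext j
  simp [divCLM, div_eq_inv_mul]

lemma hasFDerivAt_softExpInv {p q : Fin n → ℝ} (hp : ∀ j, p j ≠ 0) (hq : ∀ j, q j ≠ 0) :
    HasFDerivAt (softExpInv p) (projTCLM.comp (divCLM q)) q := by
  refine projTCLM.hasFDerivAt.comp q (hasFDerivAt_pi.2 fun j => ?_)
  have hqj : HasFDerivAt (fun q : Fin n → ℝ => q j) (proj (R := ℝ) j) q := hasFDerivAt_apply j q
  have h := (hqj.mul_const (p j)⁻¹).log (mul_ne_zero (hq j) (inv_ne_zero (hp j)))
  simp only [div_eq_mul_inv]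
  refine h.congr_fderiv ?_
  rw [smul_smul]
  congr 1
  field_simp [hp j]

end SoftExpInv

section SimilarityMap

variable {m n : ℕ} (nbh : Fin m → Finset (Fin m)) (ω : Fin m → Fin m → ℝ)
  (D : Fin m → Fin n → ℝ) (ρ : ℝ)

lemma hasFDerivAt_simMap_row (hn : 0 < n) {W : Fin m → Fin n → ℝ} (hW : ∀ k j, 0 < W k j)
    (i : Fin m) :
    HasFDerivAt (fun W' => simMap nbh ω D ρ W' i)
      (∑ k ∈ nbh i, ω i k • ((replicatorCLM (simMap nbh ω D ρ W i)).comp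
        ((divCLM (W k)).comp (proj k)))) W := by
  have hp : ∀ j : Fin n, 0 < (fun _ => 1 / (n : ℝ)) j := fun _ => by positivity
  have hinner : HasFDerivAt
      (fun W' => ∑ k ∈ nbh i, ω i k • (softExpInv (fun _ => 1 / n) (W' k) - (1 / ρ) • D k))
      (∑ k ∈ nbh i, ω i k • (projTCLM.comp ((divCLM (W k)).comp (proj k)))) W :=
    HasFDerivAt.fun_sum fun k _ => by
      have hWk : HasFDerivAt (fun W' : Fin m → Fin n → ℝ => W' k) (proj (R := ℝ) k) W :=
        hasFDerivAt_apply k W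
      exact (((hasFDerivAt_softExpInv (fun j => (hp j).ne') (fun j => (hW k j).ne')).comp W
        hWk).sub_const _).const_smul (ω i k)
  have hS : ∑ j, simMap nbh ω D ρ W i j = 1 :=
    sum_softExp _ (sum_pos (fun j _ => mul_pos (hp j) (Real.exp_pos _)) ⟨⟨0, hn⟩, mem_univ _⟩).ne'
  have h : HasFDerivAt (fun W' => simMap nbh ω D ρ W' i)
      ((replicatorCLM (simMap nbh ω D ρ W i)).comp
        (∑ k ∈ nbh i, ω i k • (projTCLM.comp ((divCLM (W k)).comp (proj k))))) W :=
    (hasFDerivAt_softExp hp _).comp W hinner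
  refine h.congr_fderiv ?_
  ext V : 1
  simp only [comp_apply, _root_.sum_apply, smul_apply, replicatorCLM_apply, projTCLM_apply,
    divCLM_apply, proj_apply, replicator_sum_smul, replicator_projT hS]

end SimilarityMap

theorem similarity_map_differential_general
    (m n : ℕ) (hn : 0 < n)
    (nbh : Fin m → Finset (Fin m))
    (ω : Fin m → Fin m → ℝ)
    (D : Fin m → Fin n → ℝ) (ρ : ℝ)
    -- W in the assignment manifold
    (W : Fin m → Fin n → ℝ)
    (hW : ∀ i j, 0 < W i j) :
    -- S is differentiable at W
    DifferentiableAt ℝ (simMap nbh ω D ρ) W ∧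
    -- componentwise formula for the differential on tangent matrices V ∈ T_W
    (∀ V : Fin m → Fin n → ℝ, (∀ k, ∑ j, V k j = 0) →
      ∀ i, fderiv ℝ (fun W' => simMap nbh ω D ρ W' i) W V
        = ∑ k ∈ nbh i, ω i k • replicator (simMap nbh ω D ρ W i) (fun j => V k j / W k j)) ∧
    -- equivalent global matrix form dS(W)[V] = R_{S(W)}[A_Ω (V / W)]
    (∀ V : Fin m → Fin n → ℝ, (∀ k, ∑ j, V k j = 0) →
      fderiv ℝ (simMap nbh ω D ρ) W V
        = fun i => replicator (simMap nbh ω D ρ W i)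
            (∑ k ∈ nbh i, ω i k • fun j => V k j / W k j)) := by
  have hrow := hasFDerivAt_simMap_row nbh ω D ρ hn hW
  have hS := hasFDerivAt_pi.2 hrow
  refine ⟨hS.differentiableAt, fun V _ i => ?_, fun V _ => ?_⟩
  · rw [(hrow i).fderiv]
    simp only [_root_.sum_apply, smul_apply, comp_apply, proj_apply, divCLM_apply,
      replicatorCLM_apply]
  · rw [hS.fderiv]
    funext i
    simp only [coe_pi', _root_.sum_apply, smul_apply, comp_apply, proj_apply, divCLM_apply,
      replicatorCLM_apply, replicator_sum_smul]

/-- **Differential of the similarity map.** At `W` in the assignment manifold, applied to a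
tangent matrix `V ∈ T_W`, the differential of `S` is given componentwise by
`dS_i(W)[V] = Σ_{k ∈ N_i} ω_{ik} R_{S_i(W)}[ V_k / W_k ]` for every `i`, i.e. globally
`dS(W)[V] = R_{S(W)}[ A_Ω (V / W) ]` with the componentwise quotient `V / W`. -/
theorem similarity_map_differential
    (m n : ℕ) (hn : 0 < n)
    (nbh : Fin m → Finset (Fin m)) (hself : ∀ i, i ∈ nbh i)
    (ω : Fin m → Fin m → ℝ)
    (hω : ∀ i, ∀ k ∈ nbh i, 0 < ω i k)
    (hωsum : ∀ i, ∑ k ∈ nbh i, ω i k = 1)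
    (D : Fin m → Fin n → ℝ) (ρ : ℝ) (hρ : 0 < ρ)
    -- W in the assignment manifold
    (W : Fin m → Fin n → ℝ)
    (hW : ∀ i j, 0 < W i j) (hWsum : ∀ i, ∑ j, W i j = 1) :
    -- S is differentiable at W
    DifferentiableAt ℝ (simMap nbh ω D ρ) W ∧
    -- componentwise formula for the differential on tangent matrices V ∈ T_W
    (∀ V : Fin m → Fin n → ℝ, (∀ k, ∑ j, V k j = 0) →
      ∀ i, fderiv ℝ (fun W' => simMap nbh ω D ρ W' i) W V
        = ∑ k ∈ nbh i, ω i k • replicator (simMap nbh ω D ρ W i) (fun j => V k j / W k j)) ∧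
    -- equivalent global matrix form dS(W)[V] = R_{S(W)}[A_Ω (V / W)]
    (∀ V : Fin m → Fin n → ℝ, (∀ k, ∑ j, V k j = 0) →
      fderiv ℝ (simMap nbh ω D ρ) W V
        = fun i => replicator (simMap nbh ω D ρ W i)
            (∑ k ∈ nbh i, ω i k • fun j => V k j / W k j)) :=
  similarity_map_differential_general m n hn nbh ω D ρ W hW
end

section
/- Under the parametrization V̄ := n V, the linear assignment flow W(t) = Exp_{W₀}(V(t)), V̇(t) = R_{W₀}[ S(W₀) + dS(W₀)[V(t)] ], V(0) = 0, with initial point W₀ = 1_W (the barycenter), takes the equivalent form W(t) = exp_{1_W}(V̄(t)), V̄̇(t) = Π[S(W₀)] + R_{S(W₀)}[ A_Ω V̄(t) ], V̄(0) = 0. In particular, at the barycenter one has R_{1_{S_n}} = (1/n) Π_n. -/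
lemma repl_bary {n : ℕ} (hn : 0 < n) (a : Fin n → ℝ) :
    replicator (bary n) a = (1 / (n : ℝ)) • projT a := by
  have hne : (n : ℝ) ≠ 0 := Nat.cast_ne_zero.mpr hn.ne'
  funext j
  simp only [replicator, bary, projT, Pi.smul_apply, smul_eq_mul, ← Finset.mul_sum]
  field_simp

lemma sum_repl {n : ℕ} {p : Fin n → ℝ} (hp : ∑ j, p j = 1) (y : Fin n → ℝ) :
    ∑ j, replicator p y j = 0 := by
  simp only [replicator, Finset.sum_sub_distrib, ← Finset.sum_mul, hp, one_mul, sub_self]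

/-- **Reparametrization of the linear assignment flow.** Under `V̄ := n V`, the linear
assignment flow `W(t) = Exp_{W₀}(V(t))`, `V̇ = R_{W₀}[S(W₀) + dS(W₀)[V]]`, `V(0) = 0`
(with `W₀ = 1_W` the barycenter, `dS(W₀)[V] = R_{S(W₀)}[A_Ω (V / W₀)]`) takes the form
`W(t) = exp_{1_W}(V̄(t))`, `V̄̇ = Π[S(W₀)] + R_{S(W₀)}[A_Ω V̄]`, `V̄(0) = 0`; in particular,
at the barycenter, `R_{1_{S_n}} = (1/n) Π_n`. -/
theorem linear_assignment_flow_reparametrization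
    (m n : ℕ) (hn : 0 < n)
    -- neighborhoods and weights defining the averaging matrix A_Ω
    (nbh : Fin m → Finset (Fin m)) (hself : ∀ i, i ∈ nbh i)
    (ω : Fin m → Fin m → ℝ)
    (hω : ∀ i, ∀ k ∈ nbh i, 0 < ω i k)
    (hωsum : ∀ i, ∑ k ∈ nbh i, ω i k = 1)
    -- the similarity matrix S(W₀): rows are strictly positive probability vectors
    (S₀ : Fin m → Fin n → ℝ)
    (hS₀ : ∀ i j, 0 < S₀ i j) (hS₀sum : ∀ i, ∑ j, S₀ i j = 1)
    -- V solves the linear assignment flow V̇ = R_{W₀}[S(W₀) + dS(W₀)[V]], V(0) = 0,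
    -- where W₀ = 1_W has all rows equal to the barycenter (1/n) 1_n
    (V : ℝ → Fin m → Fin n → ℝ)
    (hV0 : V 0 = 0)
    (hVode : ∀ t, HasDerivAt V
      (fun i => replicator (bary n) (fun j => S₀ i j
        + replicator (S₀ i)
            (∑ k ∈ nbh i, ω i k • fun j' => V t k j' / bary n j') j)) t) :
    -- R at the barycenter: R_{1_{S_n}} = (1/n) Π_n
    (∀ a : Fin n → ℝ, replicator (bary n) a = (1 / (n : ℝ)) • projT a) ∧
    -- V̄ = n V satisfies V̄(0) = 0 and V̄̇ = Π[S(W₀)] + R_{S(W₀)}[A_Ω V̄]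
    ((n : ℝ) • V 0 = 0) ∧
    (∀ t, HasDerivAt (fun s => (n : ℝ) • V s)
      (fun i => projT (S₀ i)
        + replicator (S₀ i) (∑ k ∈ nbh i, ω i k • ((n : ℝ) • V t k))) t) ∧
    -- W(t) = Exp_{W₀}(V(t)) = exp_{1_W}(V̄(t))
    (∀ t i, simplexExp (bary n) (V t i) = softExp (bary n) ((n : ℝ) • V t i)) := by
  have hne : (n : ℝ) ≠ 0 := Nat.cast_ne_zero.mpr hn.ne'
  refine ⟨repl_bary hn, by simp [hV0], ?_, ?_⟩
  · intro t
    have h := (hVode t).const_smul ((n : ℝ))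
    have hY : ∀ k : Fin m, (fun j' => V t k j' / bary n j') = (n : ℝ) • V t k := by
      intro k; funext j'; simp [bary, div_div_eq_mul_div, div_one, mul_comm]
    convert h using 1
    iterate 4 rfl
    funext i j
    simp only [Pi.smul_apply, hY]
    rw [repl_bary hn]
    set Z := replicator (S₀ i) (∑ k ∈ nbh i, ω i k • ((n : ℝ) • V t k)) with hZ
    have hsZ : ∑ j', Z j' = 0 := sum_repl (hS₀sum i) _
    simp only [Pi.add_apply, Pi.smul_apply, smul_eq_mul, projT,
      Finset.sum_add_distrib, hS₀sum i, hsZ]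
    field_simp
    ring
  · intro t i
    funext j
    simp [simplexExp, softExp, bary, div_div_eq_mul_div, div_one, mul_comm]
end
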